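/- arXiv:2007.08293 — 6 statements merged into one kernel-verified Lean document; each statement's English description precedes it below -/
import Mathlib

section
/- Let d, D ∈ ℝ with d ≤ D and let Q ∈ ℝ_{>0}. Let (S_t)_{t∈ℕ} be a real-valued stochastic process adapted to a filtration (F_t)_{t∈ℕ} and let T be a stopping time with respect to (F_t) that is almost surely finite. Assume that for all t ∈ ℕ: (i) S_{min{t,T}} ∈ [d, D] almost surely; (ii) E[S_{t+1} | F_t]·1{t < T} ≤ S_t·1{t < T}; and (iii) E[(S_{t+1} − S_t)² | F_t]·1{t < T} ≥ Q·1{t < T}. Then E[T | F_0] ≤ (E[(D − S_T)² | F_0] − (D − S_0)²)/Q. -/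
/-!
The process `M t = compensatedSqGap S T D Q t = (D - S (t ∧ T))² - Q (t ∧ T)` is a
submartingale: before `T` its increment is `(ΔS)² - Q + 2 (D - S t)(S t - S (t + 1))`, where the
first part has nonnegative conditional mean by the variance bound and the second by the
supermartingale property, as `D - S t ≥ 0`. Comparing
`E[M t]` with `E[M 0] ≥ 0` bounds `Q E[t ∧ T]` by `(D - d)²`, so `T` is integrable by monotone
convergence. Then `|M t| ≤ (D - d)² + Q T`, so dominated convergence lets `t → ∞` in
`∫_A M 0 ≤ ∫_A M t` for `A ∈ F 0`, giving `(D - S 0)² ≤ E[(D - S T)² - Q T | F 0]`.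
-/

open MeasureTheory Filter Topology

section

variable {Ω : Type*} {m mΩ : MeasurableSpace Ω} {μ : Measure Ω}

theorem tendsto_stopped {β : Type*} [TopologicalSpace β] (u : ℕ → Ω → β) (T : Ω → ℕ) (ω : Ω) :
    Tendsto (fun t => u (min t (T ω)) ω) atTop (𝓝 (u (T ω) ω)) :=
  tendsto_const_nhds.congr' <| (eventually_ge_atTop (T ω)).mono fun t ht => by
    simp only [min_eq_right ht]

theorem stronglyAdapted_stopped {β : Type*} [TopologicalSpace β]
    [TopologicalSpace.PseudoMetrizableSpace β] {F : Filtration ℕ mΩ}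
    {u : ℕ → Ω → β} (hu : StronglyAdapted F u) {T : Ω → ℕ}
    (hT : IsStoppingTime F fun ω => (T ω : WithTop ℕ)) :
    StronglyAdapted F fun t ω => u (min t (T ω)) ω :=
  hu.stoppedProcess_of_discrete hT

theorem integrable_of_integral_min_le [IsFiniteMeasure μ] {T : Ω → ℕ} (hT : Measurable T) {C : ℝ}
    (h : ∀ t : ℕ, ∫ ω, ((min t (T ω) : ℕ) : ℝ) ∂μ ≤ C) :
    Integrable (fun ω => (T ω : ℝ)) μ := by
  have hmeas : ∀ t : ℕ, Measurable fun ω => ((min t (T ω) : ℕ) : ℝ) := fun t =>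
    measurable_from_top.comp (measurable_const.min hT)
  have hlim := lintegral_tendsto_of_tendsto_of_monotone (μ := μ)
    (fun t => (hmeas t).ennreal_ofReal.aemeasurable)
    (ae_of_all _ fun ω s t hst => ENNReal.ofReal_le_ofReal (by gcongr))
    (ae_of_all _ (tendsto_stopped (fun t _ => ENNReal.ofReal t) T))
  have hle : ∫⁻ ω, ENNReal.ofReal (T ω) ∂μ ≤ ENNReal.ofReal C := by
    refine le_of_tendsto' hlim fun t => ?_
    rw [← ofReal_integral_eq_lintegral_ofReal ((integrable_const (t : ℝ)).mono'
      (hmeas t).aestronglyMeasurable (ae_of_all _ fun ω => ?_))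
      (ae_of_all _ fun ω => by positivity)]
    · exact ENNReal.ofReal_le_ofReal (h t)
    · rw [Real.norm_natCast]
      exact_mod_cast min_le_left _ _
  exact (lintegral_ofReal_ne_top_iff_integrable (measurable_from_top.comp hT).aestronglyMeasurable
    (ae_of_all _ fun ω => Nat.cast_nonneg _)).mp (ne_top_of_le_ne_top ENNReal.ofReal_ne_top hle)

theorem ae_le_condExp_of_forall_setIntegral_le [IsFiniteMeasure μ] (hm : m ≤ mΩ) {f g : Ω → ℝ}
    (hf : StronglyMeasurable[m] f) (hfi : Integrable f μ) (hgi : Integrable g μ)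
    (hfg : ∀ s, MeasurableSet[m] s → ∫ ω in s, f ω ∂μ ≤ ∫ ω in s, g ω ∂μ) :
    f ≤ᵐ[μ] μ[g | m] := by
  refine ae_le_of_ae_le_trim (hm := hm) <| ae_le_of_forall_setIntegral_le (hfi.trim hm hf)
    (integrable_condExp.trim hm stronglyMeasurable_condExp) fun s hs _ => ?_
  rw [← setIntegral_trim hm hf hs, ← setIntegral_trim hm stronglyMeasurable_condExp hs,
    setIntegral_condExp hm hgi hs]
  exact hfg s hs

theorem MeasureTheory.Submartingale.ae_le_condExp_of_tendsto [IsFiniteMeasure μ]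
    {F : Filtration ℕ mΩ} {f : ℕ → Ω → ℝ} (hf : Submartingale f F μ) {g bound : Ω → ℝ}
    (hbound : Integrable bound μ) (hfb : ∀ n, ∀ᵐ ω ∂μ, ‖f n ω‖ ≤ bound ω)
    (hlim : ∀ᵐ ω ∂μ, Tendsto (fun n => f n ω) atTop (𝓝 (g ω))) (i : ℕ) :
    f i ≤ᵐ[μ] μ[g | F i] := by
  have hg : Integrable g μ := by
    refine hbound.mono' (aestronglyMeasurable_of_tendsto_ae atTop
      (fun n => (hf.integrable n).aestronglyMeasurable) hlim) ?_
    filter_upwards [ae_all_iff.2 hfb, hlim] with ω hb hω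
    exact le_of_tendsto' hω.norm hb
  refine ae_le_condExp_of_forall_setIntegral_le (F.le i) (hf.stronglyAdapted i) (hf.integrable i)
    hg fun s hs => ge_of_tendsto ?_ (eventually_atTop.2 ⟨i, fun n hn => hf.setIntegral_le hn hs⟩)
  exact tendsto_integral_of_dominated_convergence bound
    (fun n => (hf.integrable n).aestronglyMeasurable.restrict) hbound.integrableOn
    (fun n => ae_restrict_of_ae (hfb n)) (ae_restrict_of_ae hlim)

theorem condExp_indicator_sub_const_nonneg [IsFiniteMeasure μ] (hm : m ≤ mΩ) {A : Set Ω}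
    (hA : MeasurableSet[m] A) {f : Ω → ℝ} (hf : Integrable f μ) {c : ℝ}
    (hc : ∀ᵐ ω ∂μ, ω ∈ A → c ≤ μ[f | m] ω) :
    0 ≤ᵐ[μ] μ[A.indicator (fun ω => f ω - c) | m] := by
  have hsub : μ[fun ω => f ω - c | m] =ᵐ[μ] fun ω => μ[f | m] ω - c :=
    (condExp_sub hf (integrable_const c) m).trans (by rw [condExp_const hm]; rfl)
  have hind : μ[A.indicator (fun ω => f ω - c) | m] =ᵐ[μ] A.indicator μ[fun ω => f ω - c | m] :=
    condExp_indicator (hf.sub (integrable_const c)) hA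
  filter_upwards [hind, hsub, hc] with ω h1 h2 hω
  rw [h1, Pi.zero_apply]
  by_cases hωA : ω ∈ A
  · rw [Set.indicator_of_mem hωA, h2, sub_nonneg]
    exact hω hωA
  · rw [Set.indicator_of_notMem hωA]

theorem condExp_mul_sub_of_stronglyMeasurable [IsFiniteMeasure μ] (hm : m ≤ mΩ)
    {g X Y : Ω → ℝ} {C : ℝ} (hg : StronglyMeasurable[m] g) (hgC : ∀ᵐ ω ∂μ, ‖g ω‖ ≤ C)
    (hX : StronglyMeasurable[m] X) (hXi : Integrable X μ) (hYi : Integrable Y μ) :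
    μ[g * (X - Y) | m] =ᵐ[μ] g * (X - μ[Y | m]) := by
  have hXY := hXi.sub hYi
  filter_upwards [condExp_mul_of_stronglyMeasurable_left hg
    (hXY.bdd_mul (hg.mono hm).aestronglyMeasurable hgC) hXY, condExp_sub hXi hYi m] with ω h1 h2
  rw [h1, Pi.mul_apply, h2, Pi.sub_apply, condExp_of_stronglyMeasurable hm hX hXi]
  rfl


noncomputable def compensatedSqGap (S : ℕ → Ω → ℝ) (T : Ω → ℕ) (D Q : ℝ) (t : ℕ) (ω : Ω) : ℝ :=
  (D - S (min t (T ω)) ω) ^ 2 - Q * (min t (T ω) : ℕ)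

theorem compensatedSqGap_succ_sub (S : ℕ → Ω → ℝ) (T : Ω → ℕ) (D Q : ℝ) (t : ℕ) :
    compensatedSqGap S T D Q (t + 1) - compensatedSqGap S T D Q t =
      {ω | t < T ω}.indicator (fun ω => (S (t + 1) ω - S t ω) ^ 2 - Q) +
        (2 : ℝ) • ({ω | t < T ω}.indicator (fun ω => D - S t ω) * (S t - S (t + 1))) := by
  ext ω
  rcases lt_or_ge t (T ω) with h | h
  · simp [compensatedSqGap, h, min_eq_left h.le]
    ring
  · simp [compensatedSqGap, h.not_gt, min_eq_right h, min_eq_right (h.trans t.le_succ)]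

theorem norm_compensatedSqGap_le {S : ℕ → Ω → ℝ} {T : Ω → ℕ} {d D : ℝ} (Q : ℝ) {t : ℕ} {ω : Ω}
    (hω : S (min t (T ω)) ω ∈ Set.Icc d D) :
    ‖compensatedSqGap S T D Q t ω‖ ≤ (D - d) ^ 2 + |Q| * (min t (T ω) : ℕ) := by
  have hsq : (D - S (min t (T ω)) ω) ^ 2 ≤ (D - d) ^ 2 := by
    nlinarith [hω.1, hω.2]
  calc ‖compensatedSqGap S T D Q t ω‖
      ≤ ‖(D - S (min t (T ω)) ω) ^ 2‖ + ‖Q * (min t (T ω) : ℕ)‖ := norm_sub_le _ _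
    _ ≤ (D - d) ^ 2 + |Q| * (min t (T ω) : ℕ) := by
      rw [Real.norm_of_nonneg (sq_nonneg _), norm_mul, Real.norm_natCast, Real.norm_eq_abs]
      gcongr

theorem stronglyAdapted_compensatedSqGap {F : Filtration ℕ mΩ} {S : ℕ → Ω → ℝ} {T : Ω → ℕ}
    (D Q : ℝ) (hS : StronglyAdapted F S) (hT : IsStoppingTime F fun ω => (T ω : WithTop ℕ)) :
    StronglyAdapted F (compensatedSqGap S T D Q) := fun t =>
  ((stronglyMeasurable_const.sub (stronglyAdapted_stopped hS hT t)).pow 2).sub <|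
    stronglyMeasurable_const.mul <| stronglyAdapted_stopped (fun _ => stronglyMeasurable_const) hT t

theorem integrable_compensatedSqGap [IsFiniteMeasure μ] {F : Filtration ℕ mΩ}
    {S : ℕ → Ω → ℝ} {T : Ω → ℕ} {d D : ℝ} (Q : ℝ) (hS : StronglyAdapted F S)
    (hT : IsStoppingTime F fun ω => (T ω : WithTop ℕ)) {t : ℕ}
    (hbdd : ∀ᵐ ω ∂μ, S (min t (T ω)) ω ∈ Set.Icc d D) :
    Integrable (compensatedSqGap S T D Q t) μ := by
  refine .of_bound ((stronglyAdapted_compensatedSqGap D Q hS hT t).mono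
    (F.le t)).aestronglyMeasurable ((D - d) ^ 2 + |Q| * t) ?_
  filter_upwards [hbdd] with ω hω
  refine (norm_compensatedSqGap_le Q hω).trans ?_
  gcongr
  exact_mod_cast min_le_left t (T ω)

theorem condExp_compensatedSqGap_succ_sub_nonneg [IsFiniteMeasure μ] {F : Filtration ℕ mΩ}
    {S : ℕ → Ω → ℝ} {T : Ω → ℕ} {d D Q : ℝ} (hdD : d ≤ D) (hS : StronglyAdapted F S)
    (hT : IsStoppingTime F fun ω => (T ω : WithTop ℕ)) {t : ℕ} (hSt : Integrable (S t) μ)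
    (hSt' : Integrable (S (t + 1)) μ)
    (hSq : Integrable (fun ω => (S (t + 1) ω - S t ω) ^ 2) μ)
    (hbdd : ∀ᵐ ω ∂μ, S (min t (T ω)) ω ∈ Set.Icc d D)
    (hsuper : ∀ᵐ ω ∂μ, t < T ω → μ[S (t + 1) | F t] ω ≤ S t ω)
    (hvar : ∀ᵐ ω ∂μ, t < T ω → Q ≤ μ[fun ω => (S (t + 1) ω - S t ω) ^ 2 | F t] ω) :
    0 ≤ᵐ[μ] μ[compensatedSqGap S T D Q (t + 1) - compensatedSqGap S T D Q t | F t] := by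
  rw [compensatedSqGap_succ_sub]
  have hA : MeasurableSet[F t] {ω | t < T ω} := by simpa using hT.measurableSet_gt t
  set A := {ω | t < T ω}
  set g := A.indicator fun ω => D - S t ω
  have hg : StronglyMeasurable[F t] g := (stronglyMeasurable_const.sub (hS t)).indicator hA
  have hg_bdd : ∀ᵐ ω ∂μ, 0 ≤ g ω ∧ g ω ≤ D - d := by
    filter_upwards [hbdd] with ω hω
    by_cases hωA : ω ∈ A
    · rw [min_eq_left (le_of_lt hωA)] at hω
      simp only [g, Set.indicator_of_mem hωA]
      constructor <;> linarith [hω.1, hω.2]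
    · simp [g, Set.indicator_of_notMem hωA, hdD]
  have hgC : ∀ᵐ ω ∂μ, ‖g ω‖ ≤ D - d := hg_bdd.mono fun ω h => by
    rw [Real.norm_eq_abs, abs_of_nonneg h.1]; exact h.2
  have hdrift_int : Integrable (g * (S t - S (t + 1))) μ :=
    (hSt.sub hSt').bdd_mul (hg.mono (F.le t)).aestronglyMeasurable hgC
  have hsq_int : Integrable (A.indicator fun ω => (S (t + 1) ω - S t ω) ^ 2 - Q) μ :=
    (hSq.sub (integrable_const Q)).indicator (F.le t _ hA)
  filter_upwards [condExp_add hsq_int (hdrift_int.smul (2 : ℝ)) (F t),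
    condExp_smul (2 : ℝ) (g * (S t - S (t + 1))) (F t),
    condExp_mul_sub_of_stronglyMeasurable (F.le t) hg hgC (hS t) hSt hSt',
    condExp_indicator_sub_const_nonneg (F.le t) hA hSq hvar, hsuper, hg_bdd]
    with ω h1 h2 h3 h4 h5 h6
  have hdrift_nonneg : 0 ≤ g ω * (S t ω - μ[S (t + 1) | F t] ω) := by
    by_cases hωA : ω ∈ A
    · exact mul_nonneg h6.1 (sub_nonneg.2 (h5 hωA))
    · simp [g, Set.indicator_of_notMem hωA]
  rw [Pi.zero_apply] at h4 ⊢
  rw [h1, Pi.add_apply, h2, Pi.smul_apply, h3]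
  simp only [Pi.mul_apply, Pi.sub_apply, smul_eq_mul]
  linarith

theorem submartingale_compensatedSqGap [IsFiniteMeasure μ] {F : Filtration ℕ mΩ}
    {S : ℕ → Ω → ℝ} {T : Ω → ℕ} {d D Q : ℝ} (hdD : d ≤ D) (hS : StronglyAdapted F S)
    (hSint : ∀ t, Integrable (S t) μ)
    (hSqint : ∀ t, Integrable (fun ω => (S (t + 1) ω - S t ω) ^ 2) μ)
    (hT : IsStoppingTime F fun ω => (T ω : WithTop ℕ))
    (hbdd : ∀ t, ∀ᵐ ω ∂μ, S (min t (T ω)) ω ∈ Set.Icc d D)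
    (hsuper : ∀ t, ∀ᵐ ω ∂μ, t < T ω → μ[S (t + 1) | F t] ω ≤ S t ω)
    (hvar : ∀ t, ∀ᵐ ω ∂μ, t < T ω → Q ≤ μ[fun ω => (S (t + 1) ω - S t ω) ^ 2 | F t] ω) :
    Submartingale (compensatedSqGap S T D Q) F μ :=
  submartingale_of_condExp_sub_nonneg_nat (stronglyAdapted_compensatedSqGap D Q hS hT)
    (fun t => integrable_compensatedSqGap Q hS hT (hbdd t)) fun t =>
      condExp_compensatedSqGap_succ_sub_nonneg hdD hS hT (hSint t) (hSint (t + 1)) (hSqint t)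
        (hbdd t) (hsuper t) (hvar t)

theorem integrable_of_submartingale_compensatedSqGap [IsFiniteMeasure μ] {F : Filtration ℕ mΩ}
    {S : ℕ → Ω → ℝ} {T : Ω → ℕ} {d D Q : ℝ} (hQ : 0 < Q)
    (hT : IsStoppingTime F fun ω => (T ω : WithTop ℕ))
    (hM : Submartingale (compensatedSqGap S T D Q) F μ)
    (hbdd : ∀ t, ∀ᵐ ω ∂μ, S (min t (T ω)) ω ∈ Set.Icc d D) :
    Integrable (fun ω => (T ω : ℝ)) μ := by
  have hTmeas : Measurable T := hT.measurable'.untopA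
  refine integrable_of_integral_min_le hTmeas (C := μ.real Set.univ * (D - d) ^ 2 / Q)
    fun t => ?_
  have hmin_int : Integrable (fun ω => ((min t (T ω) : ℕ) : ℝ)) μ :=
    .of_bound (measurable_from_top.comp (measurable_const.min hTmeas)).aestronglyMeasurable t
      (ae_of_all _ fun ω => by rw [Real.norm_natCast]; exact_mod_cast min_le_left _ _)
  have hM0 : 0 ≤ ∫ ω, compensatedSqGap S T D Q 0 ω ∂μ :=
    integral_nonneg fun ω => by simp [compensatedSqGap, sq_nonneg]
  have hM0t : ∫ ω, compensatedSqGap S T D Q 0 ω ∂μ ≤ ∫ ω, compensatedSqGap S T D Q t ω ∂μ := by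
    simpa using hM.setIntegral_le (Nat.zero_le t) MeasurableSet.univ
  have hMt : ∫ ω, compensatedSqGap S T D Q t ω ∂μ
      ≤ ∫ ω, ((D - d) ^ 2 - Q * ((min t (T ω) : ℕ) : ℝ)) ∂μ := by
    refine integral_mono_ae (hM.integrable t) ((integrable_const _).sub (hmin_int.const_mul Q)) ?_
    filter_upwards [hbdd t] with ω hω
    simp only [compensatedSqGap]
    nlinarith [hω.1, hω.2]
  rw [integral_sub (integrable_const _) (hmin_int.const_mul Q), integral_const_mul,
    integral_const, smul_eq_mul] at hMt
  rw [le_div_iff₀ hQ]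
  linarith

theorem integrable_sq_sub_stopped [IsFiniteMeasure μ] {F : Filtration ℕ mΩ} {S : ℕ → Ω → ℝ}
    {T : Ω → ℕ} {d D : ℝ} (hS : StronglyAdapted F S)
    (hT : IsStoppingTime F fun ω => (T ω : WithTop ℕ))
    (hbdd : ∀ t, ∀ᵐ ω ∂μ, S (min t (T ω)) ω ∈ Set.Icc d D) :
    Integrable (fun ω => (D - S (T ω) ω) ^ 2) μ := by
  refine .of_bound (aestronglyMeasurable_of_tendsto_ae atTop (fun t =>
      (((stronglyMeasurable_const.sub (stronglyAdapted_stopped hS hT t)).pow 2).mono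
        (F.le t)).aestronglyMeasurable)
    (ae_of_all _ (tendsto_stopped (fun t ω => (D - S t ω) ^ 2) T))) ((D - d) ^ 2) ?_
  filter_upwards [ae_all_iff.2 hbdd] with ω hω
  have hST := hω (T ω)
  rw [min_self] at hST
  rw [Real.norm_of_nonneg (sq_nonneg _)]
  nlinarith [hST.1, hST.2]

theorem sq_sub_le_condExp_of_submartingale_compensatedSqGap [IsFiniteMeasure μ]
    {F : Filtration ℕ mΩ} {S : ℕ → Ω → ℝ} {T : Ω → ℕ} {d D Q : ℝ} (hQ : 0 < Q)
    (hTint : Integrable (fun ω => (T ω : ℝ)) μ)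
    (hM : Submartingale (compensatedSqGap S T D Q) F μ)
    (hbdd : ∀ t, ∀ᵐ ω ∂μ, S (min t (T ω)) ω ∈ Set.Icc d D) :
    (fun ω => (D - S 0 ω) ^ 2) ≤ᵐ[μ] μ[fun ω => (D - S (T ω) ω) ^ 2 - Q * T ω | F 0] := by
  have hbound : ∀ t, ∀ᵐ ω ∂μ, ‖compensatedSqGap S T D Q t ω‖ ≤ (D - d) ^ 2 + Q * T ω := fun t =>
    (hbdd t).mono fun ω hω => (norm_compensatedSqGap_le Q hω).trans <| by
      rw [abs_of_pos hQ]
      gcongr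
      exact_mod_cast min_le_right t (T ω)
  refine .trans (.of_forall fun ω => ?_) (hM.ae_le_condExp_of_tendsto
    ((integrable_const ((D - d) ^ 2)).add (hTint.const_mul Q)) hbound
    (ae_of_all _ (tendsto_stopped (fun t ω => (D - S t ω) ^ 2 - Q * t) T)) 0)
  simp [compensatedSqGap]

end

/-- (Greenberg et al., corrected optional-stopping bound.)
If `S` is adapted to the filtration `F`, the stopped process stays in `[d, D]`,
`S` is a supermartingale before the stopping time `T`, and the conditional second
moment of the increments is at least `Q` before `T`, then
`E[T | F 0] ≤ (E[(D − S_T)² | F 0] − (D − S_0)²)/Q` almost surely. -/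
theorem expected_stopping_time_bound
    {Ω : Type*} {mΩ : MeasurableSpace Ω} {μ : Measure Ω} [IsProbabilityMeasure μ]
    (F : Filtration ℕ mΩ) (S : ℕ → Ω → ℝ) (T : Ω → ℕ)
    (d D Q : ℝ) (hdD : d ≤ D) (hQ : 0 < Q)
    (hadapted : Adapted F S)
    (hSint : ∀ t : ℕ, Integrable (S t) μ)
    (hSqint : ∀ t : ℕ, Integrable (fun ω => (S (t + 1) ω - S t ω) ^ 2) μ)
    (hT : IsStoppingTime F (fun ω => (T ω : WithTop ℕ)))
    (hbdd : ∀ t : ℕ, ∀ᵐ ω ∂μ, S (min t (T ω)) ω ∈ Set.Icc d D)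
    (hsuper : ∀ t : ℕ, ∀ᵐ ω ∂μ,
      (μ[S (t + 1) | F t]) ω * (if t < T ω then (1 : ℝ) else 0)
        ≤ S t ω * (if t < T ω then (1 : ℝ) else 0))
    (hvar : ∀ t : ℕ, ∀ᵐ ω ∂μ,
      Q * (if t < T ω then (1 : ℝ) else 0)
        ≤ (μ[fun ω' => (S (t + 1) ω' - S t ω') ^ 2 | F t]) ω
            * (if t < T ω then (1 : ℝ) else 0)) :
    ∀ᵐ ω ∂μ,
      (μ[fun ω' => (T ω' : ℝ) | F 0]) ω
        ≤ ((μ[fun ω' => (D - S (T ω') ω') ^ 2 | F 0]) ω - (D - S 0 ω) ^ 2) / Q := by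
  have hS : StronglyAdapted F S := hadapted.stronglyAdapted
  have hM : Submartingale (compensatedSqGap S T D Q) F μ :=
    submartingale_compensatedSqGap hdD hS hSint hSqint hT hbdd
      (fun t => (hsuper t).mono fun ω h ht => by simpa [ht] using h)
      (fun t => (hvar t).mono fun ω h ht => by simpa [ht] using h)
  have hTint := integrable_of_submartingale_compensatedSqGap hQ hT hM hbdd
  have hsplit : μ[fun ω => (D - S (T ω) ω) ^ 2 - Q * T ω | F 0] =ᵐ[μ]
      μ[fun ω => (D - S (T ω) ω) ^ 2 | F 0] - Q • μ[fun ω => (T ω : ℝ) | F 0] :=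
    (condExp_sub (integrable_sq_sub_stopped hS hT hbdd) (hTint.const_mul Q) _).trans
      (.sub .rfl (condExp_smul Q _ _))
  filter_upwards [sq_sub_le_condExp_of_submartingale_compensatedSqGap hQ hTint hM hbdd, hsplit]
    with ω hkey hω
  rw [hω, Pi.sub_apply, Pi.smul_apply, smul_eq_mul] at hkey
  rw [le_div_iff₀ hQ]
  linarith
end

section
/- Let d, D ∈ ℝ with d ≤ D, Q ∈ ℝ_{>0}, (S_t)_{t∈ℕ} a real-valued stochastic process adapted to a filtration (F_t)_{t∈ℕ}, and T a stopping time with respect to (F_t). Assume for all t ∈ ℕ: (i) S_{min{t,T}} ∈ [d, D] almost surely; (ii) E[S_{t+1} | F_t]·1{t < T} ≤ S_t·1{t < T}; and (iii) E[(S_{t+1} − S_t)² | F_t]·1{t < T} ≥ Q·1{t < T}. Let M ∈ ℝ_{≥0} satisfy M ≥ (D − S_t)²·1{t ≤ T} for all t ∈ ℕ almost surely. Then the process Z_t = ((D − S_t)² − Qt − M)·1{t ≤ T} is a submartingale with respect to (F_t), i.e., E[Z_{t+1} | F_t] ≥ Z_t for all t ∈ ℕ. -/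
/-!
On the `F t`-measurable event `{t < T}` expand `(D - S (t+1))²` around `S t`:
`(D - S t)² + 2 (D - S t) (S t - S (t+1)) + (S (t+1) - S t)²`. Since `D - S t` is `F t`-measurable
and bounded there, the cross term has conditional expectation `2 (D - S t) (S t - E[S (t+1) | F t]) ≥ 0`,
and the squared increment contributes at least `Q`, which pays for the extra `-Q`. On `{t = T}` the
next value vanishes while the current one is `≤ 0` by the choice of `M`; after `T` both vanish.
-/

open MeasureTheory

section OneStep

variable {Ω : Type*} {m mΩ : MeasurableSpace Ω} {μ : Measure Ω} {s : Set Ω} {X Y : Ω → ℝ}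
  {c d D : ℝ}

lemma indicator_sq_sub_sub_eq (s : Set Ω) (c D : ℝ) (X Y : Ω → ℝ) :
    (s.indicator fun ω => (D - Y ω) ^ 2 - c) =
      (s.indicator fun ω => D - X ω) ^ 2 +
        (fun ω => 2 * s.indicator (fun ω => D - X ω) ω) * (X - Y) +
        s.indicator fun ω => (Y ω - X ω) ^ 2 - c := by
  ext ω
  by_cases hω : ω ∈ s
  · simp only [Pi.add_apply, Pi.mul_apply, Pi.pow_apply, Pi.sub_apply, Set.indicator_of_mem hω]
    ring
  · simp [hω]

lemma ae_norm_indicator_sub_le (hX : ∀ᵐ ω ∂μ, ω ∈ s → X ω ∈ Set.Icc d D) (hdD : d ≤ D) :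
    ∀ᵐ ω ∂μ, ‖s.indicator (fun ω => D - X ω) ω‖ ≤ D - d := by
  filter_upwards [hX] with ω hω
  by_cases hs : ω ∈ s
  · have hXω := hω hs
    rw [Set.indicator_of_mem hs, Real.norm_eq_abs, abs_of_nonneg (by linarith [hXω.2])]
    linarith [hXω.1]
  · simpa [hs] using hdD

theorem condExp_indicator_sq_sub_sub_ae_eq [IsFiniteMeasure μ] (hm : m ≤ mΩ)
    (hs : MeasurableSet[m] s) (hXm : StronglyMeasurable[m] X) (hX : Integrable X μ)
    (hY : Integrable Y μ) (hXY : Integrable (fun ω => (Y ω - X ω) ^ 2) μ)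
    (hbdd : ∀ᵐ ω ∂μ, ω ∈ s → X ω ∈ Set.Icc d D) (hdD : d ≤ D) :
    μ[s.indicator fun ω => (D - Y ω) ^ 2 - c | m] =ᵐ[μ] s.indicator fun ω =>
      (D - X ω) ^ 2 + 2 * (D - X ω) * (X ω - μ[Y | m] ω) +
        μ[fun ω => (Y ω - X ω) ^ 2 | m] ω - c := by
  set u := s.indicator fun ω => D - X ω
  have hu : StronglyMeasurable[m] u := (stronglyMeasurable_const.sub hXm).indicator hs
  have hu_bdd := ae_norm_indicator_sub_le (μ := μ) hbdd hdD
  have hu2 : Integrable (u ^ 2) μ := by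
    refine Integrable.of_bound ((hu.pow 2).mono hm).aestronglyMeasurable ((D - d) ^ 2) ?_
    filter_upwards [hu_bdd] with ω hω
    simpa [norm_pow] using pow_le_pow_left₀ (norm_nonneg _) hω 2
  have h2u_bdd : ∀ᵐ ω ∂μ, ‖2 * u ω‖ ≤ 2 * (D - d) := by
    filter_upwards [hu_bdd] with ω hω
    rw [norm_mul, Real.norm_two]
    linarith
  have hcross : Integrable ((fun ω => 2 * u ω) * (X - Y)) μ :=
    (hX.sub hY).bdd_mul ((hu.const_mul 2).mono hm).aestronglyMeasurable h2u_bdd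
  have hq : Integrable (fun ω => (Y ω - X ω) ^ 2 - c) μ := hXY.sub (integrable_const c)
  have hq_eq : μ[fun ω => (Y ω - X ω) ^ 2 - c | m] =ᵐ[μ]
      μ[fun ω => (Y ω - X ω) ^ 2 | m] - μ[fun _ => c | m] :=
    condExp_sub hXY (integrable_const c) m
  rw [indicator_sq_sub_sub_eq s c D X Y]
  filter_upwards [condExp_add (hu2.add hcross) (hq.indicator (hm _ hs)) m,
    condExp_add hu2 hcross m,
    condExp_stronglyMeasurable_mul_of_bound hm (hu.const_mul 2) (hX.sub hY) _ h2u_bdd,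
    condExp_sub hX hY m, condExp_indicator hq hs, hq_eq]
    with ω h₁ h₂ h₃ h₄ h₅ h₆
  rw [h₁, Pi.add_apply, h₂, Pi.add_apply, h₃, Pi.mul_apply, h₄, h₅,
    condExp_of_stronglyMeasurable hm (hu.pow 2) hu2, condExp_of_stronglyMeasurable hm hXm hX]
  by_cases hω : ω ∈ s
  · rw [Set.indicator_of_mem hω, h₆, Pi.sub_apply, condExp_const hm]
    simp only [Pi.pow_apply, Pi.sub_apply, u, Set.indicator_of_mem hω]
    ring
  · simp [u, hω]

end OneStep

theorem stopped_potential_is_submartingale_general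
    {Ω : Type*} {mΩ : MeasurableSpace Ω} {μ : Measure Ω} [IsProbabilityMeasure μ]
    (F : Filtration ℕ mΩ) (S : ℕ → Ω → ℝ) (T : Ω → ℕ)
    (d D Q : ℝ) (hdD : d ≤ D) (hQ : 0 < Q)
    (hadapted : Adapted F S)
    (hSint : ∀ t : ℕ, Integrable (S t) μ)
    (hSqint : ∀ t : ℕ, Integrable (fun ω => (S (t + 1) ω - S t ω) ^ 2) μ)
    (hT : IsStoppingTime F (fun ω => (T ω : WithTop ℕ)))
    (hbdd : ∀ t : ℕ, ∀ᵐ ω ∂μ, S (min t (T ω)) ω ∈ Set.Icc d D)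
    (hsuper : ∀ t : ℕ, ∀ᵐ ω ∂μ,
      (μ[S (t + 1) | F t]) ω * (if t < T ω then (1 : ℝ) else 0)
        ≤ S t ω * (if t < T ω then (1 : ℝ) else 0))
    (hvar : ∀ t : ℕ, ∀ᵐ ω ∂μ,
      Q * (if t < T ω then (1 : ℝ) else 0)
        ≤ (μ[fun ω' => (S (t + 1) ω' - S t ω') ^ 2 | F t]) ω
            * (if t < T ω then (1 : ℝ) else 0))
    (M : ℝ)
    (hM : ∀ t : ℕ, ∀ᵐ ω ∂μ,
      (D - S t ω) ^ 2 * (if t ≤ T ω then (1 : ℝ) else 0) ≤ M) :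
    ∀ t : ℕ,
      (fun ω => ((D - S t ω) ^ 2 - Q * t - M) * (if t ≤ T ω then (1 : ℝ) else 0))
        ≤ᵐ[μ]
      μ[fun ω => ((D - S (t + 1) ω) ^ 2 - Q * (t + 1) - M)
          * (if t + 1 ≤ T ω then (1 : ℝ) else 0) | F t] := by
  intro t
  have hs : MeasurableSet[F t] {ω | t < T ω} := by
    simpa only [ENat.some_eq_natCast, Nat.cast_lt] using hT.measurableSet_gt t
  set s := {ω | t < T ω}
  have hbdd_s : ∀ᵐ ω ∂μ, ω ∈ s → S t ω ∈ Set.Icc d D := by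
    filter_upwards [hbdd t] with ω hω hlt
    rwa [min_eq_left hlt.le] at hω
  have hnext : (fun ω => ((D - S (t + 1) ω) ^ 2 - Q * (t + 1) - M)
      * (if t + 1 ≤ T ω then (1 : ℝ) else 0)) =
      s.indicator fun ω => (D - S (t + 1) ω) ^ 2 - (Q * (t + 1) + M) := by
    ext ω
    simp only [mul_boole, Set.indicator_apply, s, Set.mem_ofPred_eq, Nat.add_one_le_iff, sub_sub]
  rw [hnext]
  filter_upwards [condExp_indicator_sq_sub_sub_ae_eq (F.le t) hs (hadapted t).stronglyMeasurable
      (hSint t) (hSint (t + 1)) (hSqint t) hbdd_s hdD, hbdd_s, hsuper t, hvar t, hM t]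
    with ω hω hb hsup hv hMω
  rw [hω]
  by_cases hlt : t < T ω
  · rw [Set.indicator_of_mem (show ω ∈ s from hlt), if_pos hlt.le, mul_one]
    simp only [if_pos hlt, mul_one] at hsup hv
    nlinarith [mul_nonneg (sub_nonneg.2 (hb hlt).2) (sub_nonneg.2 hsup)]
  · rw [Set.indicator_of_notMem (show ω ∉ s from hlt)]
    by_cases hle : t ≤ T ω
    · rw [if_pos hle, mul_one] at hMω ⊢
      nlinarith [mul_nonneg hQ.le (Nat.cast_nonneg (α := ℝ) t)]
    · simp [hle]

/-- Under the drift and variance conditions before the stopping time `T`,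
the process `Z_t = ((D − S_t)² − Q·t − M)·1{t ≤ T}` is a submartingale, i.e.
`E[Z_{t+1} | F_t] ≥ Z_t` for all `t`. -/
theorem stopped_potential_is_submartingale
    {Ω : Type*} {mΩ : MeasurableSpace Ω} {μ : Measure Ω} [IsProbabilityMeasure μ]
    (F : Filtration ℕ mΩ) (S : ℕ → Ω → ℝ) (T : Ω → ℕ)
    (d D Q : ℝ) (hdD : d ≤ D) (hQ : 0 < Q)
    (hadapted : Adapted F S)
    (hSint : ∀ t : ℕ, Integrable (S t) μ)
    (hSqint : ∀ t : ℕ, Integrable (fun ω => (S (t + 1) ω - S t ω) ^ 2) μ)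
    (hT : IsStoppingTime F (fun ω => (T ω : WithTop ℕ)))
    (hbdd : ∀ t : ℕ, ∀ᵐ ω ∂μ, S (min t (T ω)) ω ∈ Set.Icc d D)
    (hsuper : ∀ t : ℕ, ∀ᵐ ω ∂μ,
      (μ[S (t + 1) | F t]) ω * (if t < T ω then (1 : ℝ) else 0)
        ≤ S t ω * (if t < T ω then (1 : ℝ) else 0))
    (hvar : ∀ t : ℕ, ∀ᵐ ω ∂μ,
      Q * (if t < T ω then (1 : ℝ) else 0)
        ≤ (μ[fun ω' => (S (t + 1) ω' - S t ω') ^ 2 | F t]) ω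
            * (if t < T ω then (1 : ℝ) else 0))
    (M : ℝ) (hM0 : 0 ≤ M)
    (hM : ∀ t : ℕ, ∀ᵐ ω ∂μ,
      (D - S t ω) ^ 2 * (if t ≤ T ω then (1 : ℝ) else 0) ≤ M) :
    ∀ t : ℕ,
      (fun ω => ((D - S t ω) ^ 2 - Q * t - M) * (if t ≤ T ω then (1 : ℝ) else 0))
        ≤ᵐ[μ]
      μ[fun ω => ((D - S (t + 1) ω) ^ 2 - Q * (t + 1) - M)
          * (if t + 1 ≤ T ω then (1 : ℝ) else 0) | F t] :=
  stopped_potential_is_submartingale_general F S T d D Q hdD hQ hadapted hSint hSqint hT hbdd hsuper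
    hvar M hM
end

section
/- If a polymer model P = (C, w, ≁) satisfies the Fernández–Procacci condition for a function f : C → ℝ_{>0}, then P also satisfies the clique dynamics condition for the same function f. -/
open scoped ENNReal Classical

/-- An abstract polymer model: a set `C` of polymers with positive real weights and a
reflexive, symmetric incompatibility relation. -/
structure PolymerModel (C : Type*) where
  w : C → ℝ
  w_pos : ∀ γ, 0 < w γ
  incomp : C → C → Prop
  incomp_refl : ∀ γ, incomp γ γ
  incomp_symm : ∀ γ γ', incomp γ γ' → incomp γ' γ

namespace PolymerModel

variable {C : Type*}

/-- A polymer family: a finite set of pairwise compatible polymers. -/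
def IsFamily (P : PolymerModel C) (Γ : Finset C) : Prop :=
  ∀ γ ∈ Γ, ∀ γ' ∈ Γ, γ ≠ γ' → ¬P.incomp γ γ'

/-- A polymer clique: a set of pairwise incompatible polymers. -/
def IsClique (P : PolymerModel C) (Λ : Set C) : Prop :=
  ∀ γ ∈ Λ, ∀ γ' ∈ Λ, P.incomp γ γ'

/-- The partition function restricted to `B`:
`Z_B = ∑_{Γ ∈ F_B} ∏_{γ ∈ Γ} w_γ` (valued in `ℝ≥0∞`). -/
noncomputable def Z (P : PolymerModel C) (B : Set C) : ℝ≥0∞ :=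
  ∑' Γ : {Γ : Finset C // P.IsFamily Γ ∧ ↑Γ ⊆ B}, ∏ γ ∈ Γ.1, ENNReal.ofReal (P.w γ)

/-- The Gibbs distribution restricted to `B`, regarded as a distribution on all finite
sets of polymers (assigning `0` outside `F_B`). -/
noncomputable def gibbs (P : PolymerModel C) (B : Set C) (Γ : Finset C) : ℝ≥0∞ :=
  if P.IsFamily Γ ∧ ↑Γ ⊆ B then (∏ γ ∈ Γ, ENNReal.ofReal (P.w γ)) / P.Z B else 0

/-- The clique dynamics condition for a function `f : C → ℝ_{>0}`:
for all `γ`, `∑_{γ' ≁ γ, γ' ≠ γ} f(γ') w_{γ'}/(1 + w_{γ'}) ≤ f(γ)`. -/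
def CliqueDynamicsCondition (P : PolymerModel C) (f : C → ℝ) : Prop :=
  ∀ γ : C,
    ∑' γ' : {γ' : C // P.incomp γ' γ ∧ γ' ≠ γ},
        ENNReal.ofReal (f γ' * P.w γ' / (1 + P.w γ')) ≤ ENNReal.ofReal (f γ)

/-- Total variation distance between two distributions on finite sets of polymers. -/
noncomputable def dTV (μ ν : Finset C → ℝ≥0∞) : ℝ≥0∞ :=
  (∑' Γ : Finset C, ((μ Γ - ν Γ) + (ν Γ - μ Γ))) / 2

end PolymerModel

/-- The Fernández–Procacci condition for a function `f : C → ℝ_{>0}`: for all `γ`,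
`∑_{Γ ∈ F_{N(γ)}} ∏_{γ' ∈ Γ} f(γ') w_{γ'} ≤ f(γ)`, where `N(γ)` is the set of polymers
incompatible with `γ`. -/
def PolymerModel.FernandezProcacciCondition {C : Type*} (P : PolymerModel C)
    (f : C → ℝ) : Prop :=
  ∀ γ : C,
    ∑' Γ : {Γ : Finset C // P.IsFamily Γ ∧ ↑Γ ⊆ {γ' | P.incomp γ' γ}},
        ∏ γ' ∈ Γ.1, ENNReal.ofReal (f γ' * P.w γ') ≤ ENNReal.ofReal (f γ)

namespace PolymerModel

variable {C : Type*}

theorem isFamily_singleton (P : PolymerModel C) (γ : C) : P.IsFamily {γ} := by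
  intro a ha b hb hab
  rw [Finset.mem_singleton] at ha hb
  exact absurd (ha.trans hb.symm) hab

/-- Singletons are polymer families, so the families in `B` contain a copy of every `S ⊆ B`. -/
theorem tsum_le_tsum_prod_families (P : PolymerModel C) {S B : Set C} (hSB : S ⊆ B)
    (g : C → ℝ≥0∞) :
    ∑' γ : S, g γ ≤ ∑' Γ : {Γ : Finset C // P.IsFamily Γ ∧ ↑Γ ⊆ B}, ∏ γ ∈ Γ.1, g γ := by
  let singleton : S → {Γ : Finset C // P.IsFamily Γ ∧ ↑Γ ⊆ B} := fun γ =>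
    ⟨{γ.1}, P.isFamily_singleton γ, by simpa using hSB γ.2⟩
  have singleton_injective : Function.Injective singleton := fun γ γ' h =>
    Subtype.ext (Finset.singleton_injective (congrArg Subtype.val h))
  calc ∑' γ : S, g γ = ∑' γ : S, ∏ γ' ∈ (singleton γ).1, g γ' := by simp [singleton]
    _ ≤ _ := ENNReal.tsum_comp_le_tsum_of_injective singleton_injective _

end PolymerModel

theorem ENNReal.ofReal_div_one_add_le (x : ℝ) {w : ℝ} (hw : 0 ≤ w) :
    ENNReal.ofReal (x / (1 + w)) ≤ ENNReal.ofReal x := by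
  rw [ENNReal.ofReal_div_of_pos (by positivity)]
  have one_le : 1 ≤ ENNReal.ofReal (1 + w) := ENNReal.one_le_ofReal.2 (le_add_of_nonneg_right hw)
  exact ENNReal.div_le_of_le_mul (le_mul_of_one_le_right' one_le)

theorem fp_implies_clique_dynamics_general {C : Type*}
    (P : PolymerModel C) (f : C → ℝ)
    (hFP : P.FernandezProcacciCondition f) :
    P.CliqueDynamicsCondition f := by
  intro γ
  calc ∑' γ' : {γ' : C // P.incomp γ' γ ∧ γ' ≠ γ},
        ENNReal.ofReal (f γ' * P.w γ' / (1 + P.w γ'))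
      ≤ ∑' γ' : {γ' : C // P.incomp γ' γ ∧ γ' ≠ γ}, ENNReal.ofReal (f γ' * P.w γ') :=
        ENNReal.tsum_le_tsum fun γ' => ENNReal.ofReal_div_one_add_le _ (P.w_pos γ').le
    _ ≤ _ := P.tsum_le_tsum_prod_families (S := {γ' | P.incomp γ' γ ∧ γ' ≠ γ})
        (fun _ h => h.1) _
    _ ≤ ENNReal.ofReal (f γ) := hFP γ

/-- If a polymer model satisfies the Fernández–Procacci condition
for `f : C → ℝ_{>0}`, then it also satisfies the clique dynamics condition for `f`. -/
theorem fp_implies_clique_dynamics {C : Type*} [Countable C] [Nonempty C]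
    (P : PolymerModel C) (f : C → ℝ) (hf : ∀ γ, 0 < f γ)
    (hFP : P.FernandezProcacciCondition f) :
    P.CliqueDynamicsCondition f :=
  fp_implies_clique_dynamics_general P f hFP
end

section
/- Let P = (C, w, ≁) be a polymer model with finite partition function Z, let {Λ_i}_{i∈[m]} be a polymer clique cover of size m, and let |·| : C → ℝ_{>0} be a size function. Suppose there are k ∈ ℝ and ε ∈ (0,1) such that for all i ∈ [m], ∑_{γ ∈ Λ_i, |γ| > k} w_γ ≤ ε/m. Then e^{−ε} ≤ Z_{≤k}/Z ≤ 1 and d_TV(μ, μ_{≤k}) ≤ ε. -/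
open scoped ENNReal Classical

/-!
Split the polymers into those of size at most `k` and, for each clique `Λ i` of the cover, the
large polymers of `Λ i`. A family contains at most one polymer from each clique, so adding the
large polymers of one clique multiplies the partition function by at most
`1 + ∑_{γ ∈ Λ i, |γ| > k} w_γ ≤ 1 + ε/m`; over the `m` cliques this gives
`Z ≤ (1 + ε/m)^m Z_{≤k} ≤ e^ε Z_{≤k}`. Since `μ_{≤k}` is `μ` conditioned on the event
`F_{C^{≤k}}`, whose probability is `Z_{≤k}/Z`, the total variation distance is
`1 - Z_{≤k}/Z ≤ 1 - e^{-ε} ≤ ε`.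
-/

theorem ENNReal.tsum_sub_of_le {ι : Type*} {f g : ι → ℝ≥0∞} (hg : ∑' i, g i ≠ ∞)
    (hgf : g ≤ f) :
    ∑' i, (f i - g i) = ∑' i, f i - ∑' i, g i :=
  ENNReal.eq_sub_of_add_eq hg <| by
    rw [← ENNReal.tsum_add]
    exact tsum_congr fun i => tsub_add_cancel_of_le (hgf i)

theorem ENNReal.tsum_div_const {ι : Type*} (f : ι → ℝ≥0∞) (c : ℝ≥0∞) :
    ∑' i, f i / c = (∑' i, f i) / c := by
  simp only [div_eq_mul_inv, ENNReal.tsum_mul_right]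

theorem Real.one_add_div_pow_le_exp {x : ℝ} (hx : 0 ≤ x) (n : ℕ) :
    (1 + x / n) ^ n ≤ Real.exp x := by
  simpa [sub_eq_add_neg, neg_div] using
    Real.one_sub_div_pow_le_exp_neg (n := n) (t := -x) (by linarith [n.cast_nonneg (α := ℝ)])

theorem ENNReal.ofReal_exp_neg_le_div {x : ℝ} {a b : ℝ≥0∞}
    (h : a ≤ ENNReal.ofReal (Real.exp x) * b) (ha0 : a ≠ 0) (ha : a ≠ ⊤) :
    ENNReal.ofReal (Real.exp (-x)) ≤ b / a := by
  rw [ENNReal.le_div_iff_mul_le (Or.inl ha0) (Or.inl ha)]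
  calc ENNReal.ofReal (Real.exp (-x)) * a
      ≤ ENNReal.ofReal (Real.exp (-x)) * (ENNReal.ofReal (Real.exp x) * b) := by gcongr
    _ = b := by
        rw [← mul_assoc, ← ENNReal.ofReal_mul (Real.exp_pos _).le, ← Real.exp_add,
          neg_add_cancel, Real.exp_zero, ENNReal.ofReal_one, one_mul]

theorem ENNReal.one_sub_ofReal_exp_neg_le (x : ℝ) :
    1 - ENNReal.ofReal (Real.exp (-x)) ≤ ENNReal.ofReal x := by
  rw [← ENNReal.ofReal_one, ← ENNReal.ofReal_sub _ (Real.exp_pos _).le]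
  exact ENNReal.ofReal_le_ofReal (by linarith [Real.one_sub_le_exp_neg x])

namespace PolymerModel

variable {C : Type*}

theorem IsClique.mono {P : PolymerModel C} {Λ Λ' : Set C} (h : P.IsClique Λ')
    (hΛ : Λ ⊆ Λ') : P.IsClique Λ :=
  fun γ hγ γ' hγ' => h γ (hΛ hγ) γ' (hΛ hγ')

theorem dTV_div_tsum_le {f g : Finset C → ℝ≥0∞} (hgf : g ≤ f) (hf0 : ∑' Γ, f Γ ≠ 0)
    (hf : ∑' Γ, f Γ ≠ ⊤) :
    dTV (fun Γ => f Γ / ∑' Γ, f Γ) (fun Γ => g Γ / ∑' Γ, g Γ)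
      ≤ 1 - (∑' Γ, g Γ) / ∑' Γ, f Γ := by
  set a := ∑' Γ, f Γ
  set b := ∑' Γ, g Γ
  have hba : b ≤ a := ENNReal.tsum_le_tsum hgf
  have hga : ∑' Γ, g Γ / a ≠ ⊤ := by
    rw [ENNReal.tsum_div_const]
    exact ne_top_of_le_ne_top ENNReal.one_ne_top
      ((ENNReal.div_le_div_right hba a).trans ENNReal.div_self_le_one)
  have hgab : ∀ Γ, g Γ / a ≤ g Γ / b := fun Γ => ENNReal.div_le_div_left hba _
  have hfirst : ∑' Γ, (f Γ / a - g Γ / a) = 1 - b / a := by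
    rw [ENNReal.tsum_sub_of_le hga fun Γ => ENNReal.div_le_div_right (hgf Γ) a,
      ENNReal.tsum_div_const, ENNReal.tsum_div_const, ENNReal.div_self hf0 hf]
  have hsecond : ∑' Γ, (g Γ / b - g Γ / a) ≤ 1 - b / a := by
    rw [ENNReal.tsum_sub_of_le hga hgab, ENNReal.tsum_div_const, ENNReal.tsum_div_const]
    exact tsub_le_tsub_right ENNReal.div_self_le_one _
  calc dTV (fun Γ => f Γ / a) (fun Γ => g Γ / b)
      ≤ (∑' Γ, ((f Γ / a - g Γ / a) + (g Γ / b - g Γ / a))) / 2 := by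
        unfold dTV
        gcongr with Γ
        · exact hgab Γ
        · exact ENNReal.div_le_div_right (hgf Γ) a
    _ ≤ ((1 - b / a) + (1 - b / a)) / 2 := by
        rw [ENNReal.tsum_add, hfirst]
        gcongr
    _ = 1 - b / a := by rw [ENNReal.add_div, ENNReal.add_halves]

variable (P : PolymerModel C)

noncomputable def familyWeight (B : Set C) (Γ : Finset C) : ℝ≥0∞ :=
  if P.IsFamily Γ ∧ ↑Γ ⊆ B then ∏ γ ∈ Γ, ENNReal.ofReal (P.w γ) else 0

theorem Z_eq_tsum_familyWeight (B : Set C) : P.Z B = ∑' Γ, P.familyWeight B Γ := by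
  refine (tsum_subtype {Γ : Finset C | P.IsFamily Γ ∧ ↑Γ ⊆ B}
    fun Γ => ∏ γ ∈ Γ, ENNReal.ofReal (P.w γ)).trans (tsum_congr fun Γ => ?_)
  simp [familyWeight, Set.indicator_apply]

theorem gibbs_eq_familyWeight_div (B : Set C) :
    P.gibbs B = fun Γ => P.familyWeight B Γ / P.Z B := by
  ext Γ
  unfold gibbs familyWeight
  split_ifs <;> simp

theorem one_le_Z (B : Set C) : 1 ≤ P.Z B := by
  rw [Z_eq_tsum_familyWeight]
  refine le_of_eq_of_le ?_ (ENNReal.le_tsum ∅)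
  simp [familyWeight, IsFamily]

theorem Z_ne_zero (B : Set C) : P.Z B ≠ 0 :=
  (zero_lt_one.trans_le (P.one_le_Z B)).ne'

theorem familyWeight_mono {B B' : Set C} (h : B ⊆ B') (Γ : Finset C) :
    P.familyWeight B Γ ≤ P.familyWeight B' Γ := by
  unfold familyWeight
  split_ifs with hB hB'
  · exact le_rfl
  · exact absurd ⟨hB.1, hB.2.trans h⟩ hB'
  · exact zero_le
  · exact le_rfl

theorem Z_mono {B B' : Set C} (h : B ⊆ B') : P.Z B ≤ P.Z B' := by
  simp only [Z_eq_tsum_familyWeight]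
  exact ENNReal.tsum_le_tsum (P.familyWeight_mono h)

theorem familyWeight_union_le_mul_erase {B D : Set C} (hD : P.IsClique D) {γ : C} (hγD : γ ∈ D)
    {Γ : Finset C} (hγΓ : γ ∈ Γ) :
    P.familyWeight (B ∪ D) Γ ≤ ENNReal.ofReal (P.w γ) * P.familyWeight B (Γ.erase γ) := by
  by_cases hΓ : P.IsFamily Γ ∧ ↑Γ ⊆ B ∪ D
  · obtain ⟨hfam, hsub⟩ := hΓ
    have hfam' : P.IsFamily (Γ.erase γ) := fun a ha b hb =>
      hfam a (Finset.mem_of_mem_erase ha) b (Finset.mem_of_mem_erase hb)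
    -- the clique `D` meets the family `Γ` only in `γ`
    have hsub' : ↑(Γ.erase γ) ⊆ B := by
      intro x hx
      obtain ⟨hxγ, hxΓ⟩ := Finset.mem_erase.1 hx
      exact (hsub hxΓ).resolve_right fun hxD => hfam x hxΓ γ hγΓ hxγ (hD x hxD γ hγD)
    rw [familyWeight, if_pos ⟨hfam, hsub⟩, familyWeight, if_pos ⟨hfam', hsub'⟩]
    exact (Finset.mul_prod_erase Γ _ hγΓ).ge
  · rw [familyWeight, if_neg hΓ]
    exact zero_le

theorem tsum_familyWeight_union_mem_le {B D : Set C} (hD : P.IsClique D) {γ : C}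
    (hγD : γ ∈ D) :
    ∑' Γ : {Γ : Finset C // γ ∈ Γ}, P.familyWeight (B ∪ D) Γ
      ≤ ENNReal.ofReal (P.w γ) * P.Z B := by
  have herase_inj : Function.Injective fun Γ : {Γ : Finset C // γ ∈ Γ} => Γ.1.erase γ :=
    fun Γ₁ Γ₂ h => Subtype.ext <| by
      rw [← Finset.insert_erase Γ₁.2, ← Finset.insert_erase Γ₂.2]
      exact congrArg (insert γ) h
  calc ∑' Γ : {Γ : Finset C // γ ∈ Γ}, P.familyWeight (B ∪ D) Γ
      ≤ ∑' Γ : {Γ : Finset C // γ ∈ Γ},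
          ENNReal.ofReal (P.w γ) * P.familyWeight B (Γ.1.erase γ) :=
        ENNReal.tsum_le_tsum fun Γ => P.familyWeight_union_le_mul_erase hD hγD Γ.2
    _ ≤ ∑' Γ, ENNReal.ofReal (P.w γ) * P.familyWeight B Γ :=
        ENNReal.tsum_comp_le_tsum_of_injective herase_inj _
    _ = ENNReal.ofReal (P.w γ) * P.Z B := by
        rw [ENNReal.tsum_mul_left, Z_eq_tsum_familyWeight]

theorem familyWeight_union_le (B D : Set C) (Γ : Finset C) :
    P.familyWeight (B ∪ D) Γ ≤ P.familyWeight B Γ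
      + ∑' γ : D, {Γ : Finset C | (γ : C) ∈ Γ}.indicator (P.familyWeight (B ∪ D)) Γ := by
  by_cases hΓ : P.IsFamily Γ ∧ ↑Γ ⊆ B ∪ D
  · by_cases hB : ↑Γ ⊆ B
    · refine le_add_right (le_of_eq ?_)
      rw [familyWeight, familyWeight, if_pos hΓ, if_pos ⟨hΓ.1, hB⟩]
    · obtain ⟨γ, hγΓ, hγB⟩ := Set.not_subset.1 hB
      have hγD : γ ∈ D := (hΓ.2 hγΓ).resolve_left hγB
      refine le_add_left (le_of_eq_of_le ?_ (ENNReal.le_tsum (⟨γ, hγD⟩ : D)))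
      exact (Set.indicator_of_mem (s := {Γ : Finset C | γ ∈ Γ}) hγΓ _).symm
  · rw [familyWeight, if_neg hΓ]
    exact zero_le

theorem Z_union_clique_le (B : Set C) {D : Set C} (hD : P.IsClique D) :
    P.Z (B ∪ D) ≤ (1 + ∑' γ : D, ENNReal.ofReal (P.w γ)) * P.Z B := by
  calc P.Z (B ∪ D) = ∑' Γ, P.familyWeight (B ∪ D) Γ := P.Z_eq_tsum_familyWeight _
    _ ≤ ∑' Γ, (P.familyWeight B Γ
          + ∑' γ : D,
              {Γ : Finset C | (γ : C) ∈ Γ}.indicator (P.familyWeight (B ∪ D)) Γ) :=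
        ENNReal.tsum_le_tsum (P.familyWeight_union_le B D)
    _ = P.Z B
          + ∑' γ : D, ∑' Γ : {Γ : Finset C // ↑γ ∈ Γ},
              P.familyWeight (B ∪ D) Γ := by
        rw [ENNReal.tsum_add, ENNReal.tsum_comm, ← Z_eq_tsum_familyWeight]
        simp only [← tsum_subtype]
        rfl
    _ ≤ P.Z B + ∑' γ : D, ENNReal.ofReal (P.w γ) * P.Z B := by
        gcongr with γ
        exact P.tsum_familyWeight_union_mem_le hD γ.2
    _ = (1 + ∑' γ : D, ENNReal.ofReal (P.w γ)) * P.Z B := by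
        rw [ENNReal.tsum_mul_right, add_mul, one_mul]

theorem Z_union_biUnion_clique_le {ι : Type*} (S : Set C) {D : ι → Set C}
    (hD : ∀ i, P.IsClique (D i)) (s : Finset ι) :
    P.Z (S ∪ ⋃ i ∈ s, D i)
      ≤ (∏ i ∈ s, (1 + ∑' γ : D i, ENNReal.ofReal (P.w γ))) * P.Z S := by
  classical
  induction s using Finset.induction_on with
  | empty => simp
  | insert j s hj ih =>
    rw [Finset.set_biUnion_insert, Set.union_left_comm, Set.union_comm, Finset.prod_insert hj,
      mul_assoc]
    exact (P.Z_union_clique_le _ (hD j)).trans (by gcongr)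

theorem Z_le_exp_mul_Z_of_clique_cover {m : ℕ} {Λ : Fin m → Set C}
    (hclique : ∀ i, P.IsClique (Λ i)) (hcover : (⋃ i, Λ i) = Set.univ) (size : C → ℝ)
    {k ε : ℝ} (hε : 0 ≤ ε)
    (htrunc : ∀ i, ∑' γ : ↥(Λ i ∩ {γ | k < size γ}), ENNReal.ofReal (P.w γ)
      ≤ ENNReal.ofReal (ε / m)) :
    P.Z Set.univ ≤ ENNReal.ofReal (Real.exp ε) * P.Z {γ | size γ ≤ k} := by
  have hsplit :
      {γ | size γ ≤ k} ∪ ⋃ i ∈ Finset.univ, Λ i ∩ {γ | k < size γ} = Set.univ := by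
    refine Set.eq_univ_of_forall fun γ => (le_or_gt (size γ) k).imp id fun hγ => ?_
    obtain ⟨i, hi⟩ := Set.mem_iUnion.1 (hcover ▸ Set.mem_univ γ)
    exact Set.mem_biUnion (Finset.mem_coe.2 (Finset.mem_univ i)) ⟨hi, hγ⟩
  calc P.Z Set.univ
      = P.Z ({γ | size γ ≤ k} ∪ ⋃ i ∈ Finset.univ, Λ i ∩ {γ | k < size γ}) := by
        rw [hsplit]
    _ ≤ (∏ i, (1 + ∑' γ : ↥(Λ i ∩ {γ | k < size γ}), ENNReal.ofReal (P.w γ)))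
          * P.Z {γ | size γ ≤ k} :=
        P.Z_union_biUnion_clique_le _ (fun i => (hclique i).mono Set.inter_subset_left) _
    _ ≤ (1 + ENNReal.ofReal (ε / m)) ^ m * P.Z {γ | size γ ≤ k} := by
        rw [← Fin.prod_const]
        gcongr with i
        exact htrunc i
    _ = ENNReal.ofReal ((1 + ε / m) ^ m) * P.Z {γ | size γ ≤ k} := by
        rw [ENNReal.ofReal_pow (by positivity),
          ENNReal.ofReal_add zero_le_one (div_nonneg hε m.cast_nonneg), ENNReal.ofReal_one]
    _ ≤ ENNReal.ofReal (Real.exp ε) * P.Z {γ | size γ ≤ k} := by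
        gcongr
        exact Real.one_add_div_pow_le_exp hε m

theorem dTV_gibbs_le {B B' : Set C} (hB : B ⊆ B') (hZ : P.Z B' ≠ ⊤) :
    dTV (P.gibbs B') (P.gibbs B) ≤ 1 - P.Z B / P.Z B' := by
  simp only [gibbs_eq_familyWeight_div, Z_eq_tsum_familyWeight] at hZ ⊢
  refine dTV_div_tsum_le (P.familyWeight_mono hB) ?_ hZ
  rw [← Z_eq_tsum_familyWeight]
  exact P.Z_ne_zero B'

end PolymerModel

theorem model_truncation_general {C : Type*}
    (P : PolymerModel C) (hZfin : P.Z Set.univ ≠ ⊤)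
    {m : ℕ} (Λ : Fin m → Set C)
    (hclique : ∀ i, P.IsClique (Λ i)) (hcover : (⋃ i, Λ i) = Set.univ)
    (size : C → ℝ)
    (k : ℝ) (ε : ℝ) (hε : ε ∈ Set.Ioo (0 : ℝ) 1)
    (htrunc : ∀ i : Fin m,
      ∑' γ : {γ : C // γ ∈ Λ i ∧ k < size γ}, ENNReal.ofReal (P.w γ)
        ≤ ENNReal.ofReal (ε / m)) :
    (ENNReal.ofReal (Real.exp (-ε)) ≤ P.Z {γ | size γ ≤ k} / P.Z Set.univ ∧
        P.Z {γ | size γ ≤ k} / P.Z Set.univ ≤ 1) ∧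
      PolymerModel.dTV (P.gibbs Set.univ) (P.gibbs {γ | size γ ≤ k})
        ≤ ENNReal.ofReal ε := by
  have hlow := ENNReal.ofReal_exp_neg_le_div
    (P.Z_le_exp_mul_Z_of_clique_cover hclique hcover size hε.1.le htrunc) (P.Z_ne_zero _) hZfin
  refine ⟨⟨hlow, ENNReal.div_le_of_le_mul ?_⟩, ?_⟩
  · rw [one_mul]
    exact P.Z_mono (Set.subset_univ _)
  · calc PolymerModel.dTV (P.gibbs Set.univ) (P.gibbs {γ | size γ ≤ k})
        ≤ 1 - P.Z {γ | size γ ≤ k} / P.Z Set.univ := P.dTV_gibbs_le (Set.subset_univ _) hZfin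
      _ ≤ 1 - ENNReal.ofReal (Real.exp (-ε)) := tsub_le_tsub_left hlow 1
      _ ≤ ENNReal.ofReal ε := ENNReal.one_sub_ofReal_exp_neg_le ε

/-- If for every clique of a clique cover the polymers of size
greater than `k` have total weight at most `ε/m`, then
`e^{−ε} ≤ Z_{≤k}/Z ≤ 1` and `d_TV(μ, μ_{≤k}) ≤ ε`. -/
theorem model_truncation {C : Type*} [Countable C]
    (P : PolymerModel C) (hZfin : P.Z Set.univ ≠ ⊤)
    {m : ℕ} (hm : 0 < m) (Λ : Fin m → Set C)
    (hclique : ∀ i, P.IsClique (Λ i)) (hcover : (⋃ i, Λ i) = Set.univ)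
    (size : C → ℝ) (hsize : ∀ γ, 0 < size γ)
    (k : ℝ) (ε : ℝ) (hε : ε ∈ Set.Ioo (0 : ℝ) 1)
    (htrunc : ∀ i : Fin m,
      ∑' γ : {γ : C // γ ∈ Λ i ∧ k < size γ}, ENNReal.ofReal (P.w γ)
        ≤ ENNReal.ofReal (ε / m)) :
    (ENNReal.ofReal (Real.exp (-ε)) ≤ P.Z {γ | size γ ≤ k} / P.Z Set.univ ∧
        P.Z {γ | size γ ≤ k} / P.Z Set.univ ≤ 1) ∧
      PolymerModel.dTV (P.gibbs Set.univ) (P.gibbs {γ | size γ ≤ k})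
        ≤ ENNReal.ofReal ε :=
  model_truncation_general P hZfin Λ hclique hcover size k ε hε htrunc
end

section
/- Let P = (C, w, ≁) be a polymer model with finite partition function, and let {Λ_i}_{i∈[m]} be a polymer clique cover of size m. Then for every subset B ⊆ C, Z_B ≤ ∏_{i∈[m]} (1 + ∑_{γ ∈ B ∩ Λ_i} w_γ). -/
open scoped ENNReal Classical

/-! Choose for every polymer a clique of the cover containing it. A family meets each clique at
most once, so it is encoded injectively by the map sending each clique to the polymer of the family
assigned to it, or to nothing; the weight of the family is the product over cliques of the weight
of that entry, with nothing weighing `1`. Summing this product over all maps instead of only the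
encodings of families gives exactly the expansion of `∏ i, (1 + ∑_{γ ∈ B ∩ Λ i} w γ)`. -/

namespace ENNReal

theorem tsum_option {α : Type*} (f : Option α → ℝ≥0∞) :
    ∑' o, f o = f none + ∑' a, f (some a) := by
  rw [← (Equiv.optionEquivSumPUnit.{0} α).symm.tsum_eq,
    ENNReal.summable.tsum_sum ENNReal.summable, add_comm]
  simp [Equiv.optionEquivSumPUnit]

theorem prod_univ_tsum {ι α : Type*} [Fintype ι] (g : ι → α → ℝ≥0∞) :
    ∏ i, ∑' a, g i a = ∑' f : ι → α, ∏ i, g i (f i) := by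
  revert g
  refine Fintype.induction_empty_option (P := fun ι _ => ∀ g : ι → α → ℝ≥0∞,
    ∏ i, ∑' a, g i a = ∑' f : ι → α, ∏ i, g i (f i)) ?_ ?_ ?_ ι
  · intro ι κ _ e ih g
    let := Fintype.ofEquiv κ e.symm
    rw [← (e.arrowCongr (Equiv.refl α)).tsum_eq,
      ← Fintype.prod_equiv e (fun i => ∑' a, g (e i) a) _ fun _ => rfl, ih]
    exact tsum_congr fun f => Fintype.prod_equiv e _ _ fun i => by simp [Equiv.arrowCongr]
  · intro g
    simp
  · intro ι _ ih g
    rw [← (Equiv.piOptionEquivProd (β := fun _ => α)).symm.tsum_eq, ENNReal.tsum_prod']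
    simp [Equiv.piOptionEquivProd, Fintype.prod_option, ENNReal.tsum_mul_left,
      ENNReal.tsum_mul_right, ih]

end ENNReal

namespace Finset

variable {α ι : Type*} {idx : α → ι} {Γ : Finset α} {i : ι} {γ : α}

noncomputable def fiberRep (idx : α → ι) (Γ : Finset α) (i : ι) : Option α :=
  if h : ∃ γ ∈ Γ, idx γ = i then some h.choose else none

theorem fiberRep_eq_some_iff (h : Set.InjOn idx Γ) :
    fiberRep idx Γ i = some γ ↔ γ ∈ Γ ∧ idx γ = i := by
  unfold fiberRep
  split_ifs with hex
  · rw [Option.some_inj]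
    constructor
    · rintro rfl
      exact hex.choose_spec
    · rintro ⟨hγ, rfl⟩
      exact h hex.choose_spec.1 hγ hex.choose_spec.2
  · simpa using fun hγ hi => hex ⟨γ, hγ, hi⟩

theorem fiberRep_eq_none (hi : i ∉ Γ.image idx) : fiberRep idx Γ i = none := by
  simpa [fiberRep] using hi

theorem fiberRep_apply_self (h : Set.InjOn idx Γ) (hγ : γ ∈ Γ) :
    fiberRep idx Γ (idx γ) = some γ :=
  (fiberRep_eq_some_iff h).2 ⟨hγ, rfl⟩

theorem fiberRep_injOn : Set.InjOn (fiberRep idx) {Γ | Set.InjOn idx Γ} := by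
  intro Γ hΓ Γ' hΓ' h
  ext γ
  have mem_iff {Δ : Finset α} (hΔ : Set.InjOn idx Δ) :
      γ ∈ Δ ↔ fiberRep idx Δ (idx γ) = some γ := by
    simp [fiberRep_eq_some_iff hΔ]
  rw [mem_iff hΓ, mem_iff hΓ', h]

theorem prod_fiberRep_elim {M : Type*} [CommMonoid M] [Fintype ι] (T : ι → α → M)
    (h : Set.InjOn idx Γ) : ∏ i, (fiberRep idx Γ i).elim 1 (T i) = ∏ γ ∈ Γ, T (idx γ) γ := by
  rw [← prod_subset (Γ.image idx).subset_univ fun i _ hi => by rw [fiberRep_eq_none hi]; rfl,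
    prod_image h]
  exact prod_congr rfl fun γ hγ => by rw [fiberRep_apply_self h hγ]; rfl

end Finset

theorem ENNReal.tsum_prod_le_prod_one_add_tsum {α ι : Type*} [Fintype ι] (p : Finset α → Prop)
    (s : ι → Set α) (w : α → ℝ≥0∞) (idx : α → ι)
    (hmem : ∀ Γ, p Γ → ∀ γ ∈ Γ, γ ∈ s (idx γ)) (hinj : ∀ Γ, p Γ → Set.InjOn idx Γ) :
    ∑' Γ : {Γ // p Γ}, ∏ γ ∈ Γ.1, w γ ≤ ∏ i, (1 + ∑' γ : s i, w γ) := by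
  set T : ι → Option α → ℝ≥0∞ := fun i o => o.elim 1 ((s i).indicator w)
  have hT : ∀ i, 1 + ∑' γ : s i, w γ = ∑' o, T i o := fun i => by
    rw [tsum_option, tsum_subtype]; rfl
  calc ∑' Γ : {Γ // p Γ}, ∏ γ ∈ Γ.1, w γ
      = ∑' Γ : {Γ // p Γ}, ∏ i, T i (Γ.1.fiberRep idx i) := tsum_congr fun Γ => by
        rw [Finset.prod_fiberRep_elim _ (hinj Γ Γ.2)]
        exact Finset.prod_congr rfl fun γ hγ => (Set.indicator_of_mem (hmem Γ Γ.2 γ hγ) w).symm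
    _ ≤ ∑' f : ι → Option α, ∏ i, T i (f i) :=
        ENNReal.tsum_comp_le_tsum_of_injective (fun Γ Γ' h => Subtype.ext <|
          Finset.fiberRep_injOn (hinj Γ Γ.2) (hinj Γ' Γ'.2) h) _
    _ = ∏ i, (1 + ∑' γ : s i, w γ) := by simp_rw [← prod_univ_tsum, hT]

namespace PolymerModel

theorem IsFamily.subsingleton_inter {C : Type*} {P : PolymerModel C} {Γ : Finset C} {Λ : Set C}
    (hΓ : P.IsFamily Γ) (hΛ : P.IsClique Λ) : (↑Γ ∩ Λ).Subsingleton := by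
  rintro γ ⟨hγ, hγΛ⟩ γ' ⟨hγ', hγ'Λ⟩
  by_contra hne
  exact hΓ γ hγ γ' hγ' hne (hΛ γ hγΛ γ' hγ'Λ)

end PolymerModel

theorem restricted_partition_function_le_prod_general {C : Type*}
    (P : PolymerModel C)
    {m : ℕ} (Λ : Fin m → Set C)
    (hclique : ∀ i, P.IsClique (Λ i)) (hcover : (⋃ i, Λ i) = Set.univ)
    (B : Set C) :
    P.Z B ≤ ∏ i : Fin m, (1 + ∑' γ : ↥(B ∩ Λ i), ENNReal.ofReal (P.w γ)) := by
  choose idx hidx using fun γ => Set.mem_iUnion.1 (hcover ▸ Set.mem_univ γ)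
  refine ENNReal.tsum_prod_le_prod_one_add_tsum _ _ _ idx
    (fun Γ hΓ γ hγ => ⟨hΓ.2 hγ, hidx γ⟩) fun Γ hΓ γ hγ γ' hγ' h => ?_
  exact hΓ.1.subsingleton_inter (hclique (idx γ')) ⟨hγ, h ▸ hidx γ⟩ ⟨hγ', hidx γ'⟩

/-- For a polymer clique cover `{Λ_i}` of size `m` and any `B ⊆ C`,
`Z_B ≤ ∏_{i∈[m]} (1 + ∑_{γ ∈ B ∩ Λ_i} w_γ)`. -/
theorem restricted_partition_function_le_prod {C : Type*} [Countable C]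
    (P : PolymerModel C) (hZfin : P.Z Set.univ ≠ ⊤)
    {m : ℕ} (Λ : Fin m → Set C)
    (hclique : ∀ i, P.IsClique (Λ i)) (hcover : (⋃ i, Λ i) = Set.univ)
    (B : Set C) :
    P.Z B ≤ ∏ i : Fin m, (1 + ∑' γ : ↥(B ∩ Λ i), ENNReal.ofReal (P.w γ)) :=
  restricted_partition_function_le_prod_general P Λ hclique hcover B
end

section
/- Let m ∈ ℕ_{>0}, Z_max ∈ ℝ with Z_max ≥ 1, ε ∈ (0,1], and Z ∈ ℝ_{>0}. Let ρ_1, …, ρ_m ∈ [1/Z_max, 1] satisfy ∏_{i∈[m]} ρ_i = 1/Z. Let s be an integer with s ≥ 1 + 125·Z_max·m/ε², and on some probability space let (B_{i,j})_{i∈[m], j∈[s]} be mutually independent {0,1}-valued random variables such that for each i ∈ [m] there is p_i with E[B_{i,j}] = p_i for all j ∈ [s] and |p_i − ρ_i| ≤ ε/(5·Z_max·m). Define ρ̂_i = (1/s)∑_{j∈[s]} B_{i,j} and ρ̂ = ∏_{i∈[m]} ρ̂_i. Then with probability at least 3/4, ρ̂ > 0 and (1 − ε)·Z ≤ 1/ρ̂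 ≤ (1 + ε)·Z. -/
/-!
Write `ρ̂_i` for the row means and `P = ∏ p_i = 𝔼 ρ̂`. Since the rows are independent,
`𝔼 ρ̂² = ∏ 𝔼 ρ̂_i²`, and `𝔼 ρ̂_i² = p_i² + (p_i - p_i²)/s ≤ (1 + ε²/(100 m)) p_i²` because the sample
size gives `s p_i ≥ 100 m/ε²`. Hence `Var ρ̂ ≤ ((1 + ε²/(100 m))^m - 1) P² ≤ ε² P²/50`, and
Chebyshev's inequality gives `|ρ̂ - P| < ε P/3` with probability at least `1 - 9/50 ≥ 3/4`. Each
`p_i` has relative error at most `ε/(5m)` with respect to `ρ_i`, so `P Z ∈ [1 - ε/5, 1 + 2ε/5]`,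
and on that event `1/ρ̂` is within a factor `1 ± ε` of `Z`.
-/

open MeasureTheory ProbabilityTheory
open scoped ENNReal

lemma one_add_pow_le_one_add_two_mul {a : ℝ} (ha : 0 ≤ a) {n : ℕ} (hn : 2 * n * a ≤ 1) :
    (1 + a) ^ n ≤ 1 + 2 * n * a := by
  induction n with
  | zero => simp
  | succ k ih =>
    have hk : 2 * (k : ℝ) * a ≤ 1 := le_trans (by push_cast; nlinarith) hn
    have := ih hk
    rw [pow_succ]
    push_cast at hn ⊢
    nlinarith [pow_nonneg (by linarith : (0 : ℝ) ≤ 1 + a) k]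

lemma prod_mem_Icc_of_abs_sub_le_mul {ι : Type*} [Fintype ι] {p ρ : ι → ℝ} {δ : ℝ}
    (hδ0 : 0 ≤ δ) (hδ1 : δ ≤ 1) (hδ2 : 2 * Fintype.card ι * δ ≤ 1) (hρ : ∀ i, 0 ≤ ρ i)
    (h : ∀ i, |p i - ρ i| ≤ δ * ρ i) :
    ∏ i, p i ∈ Set.Icc ((1 - Fintype.card ι * δ) * ∏ i, ρ i)
      ((1 + 2 * Fintype.card ι * δ) * ∏ i, ρ i) := by
  have hlow i : (1 - δ) * ρ i ≤ p i := by linarith [(abs_sub_le_iff.1 (h i)).2]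
  have hup i : p i ≤ (1 + δ) * ρ i := by linarith [(abs_sub_le_iff.1 (h i)).1]
  have hprod_nonneg : 0 ≤ ∏ i, ρ i := Finset.prod_nonneg fun i _ ↦ hρ i
  have hpow_const (c : ℝ) : ∏ i, c * ρ i = c ^ Fintype.card ι * ∏ i, ρ i := by
    rw [Finset.prod_mul_distrib, Finset.prod_const, Finset.card_univ]
  constructor
  · calc (1 - Fintype.card ι * δ) * ∏ i, ρ i ≤ (1 - δ) ^ Fintype.card ι * ∏ i, ρ i := by
          gcongr
          simpa [sub_eq_add_neg] using one_add_mul_le_pow (a := -δ) (by linarith) (Fintype.card ι)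
      _ = ∏ i, (1 - δ) * ρ i := (hpow_const _).symm
      _ ≤ ∏ i, p i :=
          Finset.prod_le_prod (fun i _ ↦ mul_nonneg (by linarith) (hρ i)) fun i _ ↦ hlow i
  · calc ∏ i, p i ≤ ∏ i, (1 + δ) * ρ i :=
          Finset.prod_le_prod (fun i _ ↦ (mul_nonneg (by linarith) (hρ i)).trans (hlow i))
            fun i _ ↦ hup i
      _ = (1 + δ) ^ Fintype.card ι * ∏ i, ρ i := hpow_const _
      _ ≤ (1 + 2 * Fintype.card ι * δ) * ∏ i, ρ i := by
          gcongr
          exact one_add_pow_le_one_add_two_mul hδ0 hδ2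

namespace ProbabilityTheory

variable {Ω : Type*}

noncomputable def sampleMean {s : ℕ} (Y : Fin s → Ω → ℝ) (ω : Ω) : ℝ := (s : ℝ)⁻¹ * ∑ j, Y j ω

lemma sampleMean_mem_Icc {s : ℕ} {Y : Fin s → Ω → ℝ} {ω : Ω}
    (hY : ∀ j, Y j ω ∈ Set.Icc (0 : ℝ) 1) : sampleMean Y ω ∈ Set.Icc (0 : ℝ) 1 := by
  refine ⟨mul_nonneg (by positivity) (Finset.sum_nonneg fun j _ ↦ (hY j).1), ?_⟩
  calc sampleMean Y ω ≤ (s : ℝ)⁻¹ * ∑ _j : Fin s, (1 : ℝ) :=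
        mul_le_mul_of_nonneg_left (Finset.sum_le_sum fun j _ ↦ (hY j).2) (by positivity)
    _ ≤ 1 := by
        rcases eq_or_ne s 0 with rfl | hs
        · simp
        · simp [hs]

variable [MeasurableSpace Ω] {μ : Measure Ω}

lemma iIndepFun.curry {ι κ 𝓧 : Type*} [MeasurableSpace 𝓧] {X : ι × κ → Ω → 𝓧}
    (hX : ∀ p, Measurable (X p)) (h : iIndepFun X μ) :
    iIndepFun (fun i ω j ↦ X (i, j) ω) μ := by
  have := h.isProbabilityMeasure
  have _ p := Measure.isProbabilityMeasure_map (μ := μ) (hX p).aemeasurable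
  rw [iIndepFun_iff_map_fun_eq_infinitePi_map fun i ↦ measurable_pi_lambda _ fun j ↦ hX _]
  have hrow i : μ.map (fun ω j ↦ X (i, j) ω) = Measure.infinitePi fun j ↦ μ.map (X (i, j)) :=
    (h.precomp (Prod.mk_right_injective i)).map_fun_eq_infinitePi_map fun j ↦ hX _
  simp_rw [hrow, ← Measure.infinitePi_map_curry (fun i j ↦ μ.map (X (i, j))),
    ← h.map_fun_eq_infinitePi_map hX]
  rw [Measure.map_map (MeasurableEquiv.curry _ _ _).measurable (measurable_pi_lambda _ hX)]
  rfl

lemma memLp_of_eq_zero_or_one [IsFiniteMeasure μ] {Y : Ω → ℝ} (hY : Measurable Y)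
    (h01 : ∀ ω, Y ω = 0 ∨ Y ω = 1) (q : ℝ≥0∞) : MemLp Y q μ :=
  MemLp.of_bound hY.aestronglyMeasurable 1
    (.of_forall fun ω ↦ by rcases h01 ω with h | h <;> simp [h])

lemma variance_eq_integral_sub_sq_of_eq_zero_or_one [IsProbabilityMeasure μ] {Y : Ω → ℝ}
    (hY : Measurable Y) (h01 : ∀ ω, Y ω = 0 ∨ Y ω = 1) : Var[Y; μ] = μ[Y] - μ[Y] ^ 2 := by
  have hsq : Y ^ 2 = Y := funext fun ω ↦ by rcases h01 ω with h | h <;> simp [h]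
  rw [variance_eq_sub (memLp_of_eq_zero_or_one hY h01 2), hsq]

lemma variance_prod_le_of_iIndepFun {ι : Type*} [Fintype ι] {X : ι → Ω → ℝ} (hX : iIndepFun X μ)
    (hmeas : ∀ i, AEStronglyMeasurable (X i) μ) (hprod : MemLp (∏ i, X i) 2 μ) {η : ℝ}
    (hsq : ∀ i, μ[X i ^ 2] ≤ (1 + η) * μ[X i] ^ 2) :
    Var[∏ i, X i; μ] ≤ ((1 + η) ^ Fintype.card ι - 1) * (∏ i, μ[X i]) ^ 2 := by
  have := hX.isProbabilityMeasure
  have hsqX : iIndepFun (fun i ↦ X i ^ 2) μ := by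
    convert hX.comp (fun _ x ↦ x ^ 2) fun _ ↦ by fun_prop with i
    ext ω
    simp
  rw [variance_eq_sub hprod, ← Finset.prod_pow, hsqX.integral_prod_eq_prod_integral
    fun i ↦ (hmeas i).pow 2, hX.integral_prod_eq_prod_integral hmeas]
  calc ∏ i, μ[X i ^ 2] - (∏ i, μ[X i]) ^ 2
      ≤ ∏ i, ((1 + η) * μ[X i] ^ 2) - (∏ i, μ[X i]) ^ 2 :=
        sub_le_sub_right (Finset.prod_le_prod
          (fun i _ ↦ integral_nonneg fun ω ↦ sq_nonneg (X i ω)) fun i _ ↦ hsq i) _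
    _ = ((1 + η) ^ Fintype.card ι - 1) * (∏ i, μ[X i]) ^ 2 := by
        rw [Finset.prod_mul_distrib, Finset.prod_const, Finset.prod_pow, Finset.card_univ]
        ring

lemma ofReal_one_sub_variance_div_sq_le_measure [IsProbabilityMeasure μ] {X : Ω → ℝ}
    (hX : MemLp X 2 μ) {c : ℝ} (hc : 0 < c) :
    ENNReal.ofReal (1 - Var[X; μ] / c ^ 2) ≤ μ {ω | |X ω - μ[X]| < c} := by
  have hcover : {ω | |X ω - μ[X]| < c} ∪ {ω | c ≤ |X ω - μ[X]|} = Set.univ := by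
    ext ω; simp [lt_or_ge]
  calc ENNReal.ofReal (1 - Var[X; μ] / c ^ 2)
      = 1 - ENNReal.ofReal (Var[X; μ] / c ^ 2) := by
        rw [ENNReal.ofReal_sub _ (by positivity [variance_nonneg X μ]), ENNReal.ofReal_one]
    _ ≤ 1 - μ {ω | c ≤ |X ω - μ[X]|} := tsub_le_tsub_left (meas_ge_le_variance_div_sq hX hc) 1
    _ ≤ μ {ω | |X ω - μ[X]| < c} := by
        rw [tsub_le_iff_right, ← measure_univ (μ := μ), ← hcover]
        exact measure_union_le _ _

lemma ofReal_le_measure_abs_prod_sub_lt {ι : Type*} [Fintype ι] {X : ι → Ω → ℝ}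
    (hX : iIndepFun X μ) (hmeas : ∀ i, Measurable (X i)) (hbdd : ∀ i ω, X i ω ∈ Set.Icc (0 : ℝ) 1)
    {η : ℝ} (hη : 0 ≤ η) (hη2 : 2 * Fintype.card ι * η ≤ 1)
    (hsq : ∀ i, μ[X i ^ 2] ≤ (1 + η) * μ[X i] ^ 2) {t : ℝ} (ht : 0 < t)
    (hpos : 0 < ∏ i, μ[X i]) :
    ENNReal.ofReal (1 - 2 * Fintype.card ι * η / t ^ 2) ≤
      μ {ω | |∏ i, X i ω - ∏ i, μ[X i]| < t * ∏ i, μ[X i]} := by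
  have := hX.isProbabilityMeasure
  have hR : MemLp (∏ i, X i) 2 μ :=
    MemLp.of_bound (Finset.aestronglyMeasurable_prod _ fun i _ ↦ (hmeas i).aestronglyMeasurable) 1
      (.of_forall fun ω ↦ by
        rw [Finset.prod_apply, Real.norm_of_nonneg (Finset.prod_nonneg fun i _ ↦ (hbdd i ω).1)]
        exact Finset.prod_le_one (fun i _ ↦ (hbdd i ω).1) fun i _ ↦ (hbdd i ω).2)
  have hvar : Var[∏ i, X i; μ] ≤ 2 * Fintype.card ι * η * (∏ i, μ[X i]) ^ 2 := by
    refine (variance_prod_le_of_iIndepFun hX (fun i ↦ (hmeas i).aestronglyMeasurable) hR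
      hsq).trans ?_
    gcongr
    linarith [one_add_pow_le_one_add_two_mul hη hη2]
  have hmean : μ[∏ i, X i] = ∏ i, μ[X i] :=
    hX.integral_prod_eq_prod_integral fun i ↦ (hmeas i).aestronglyMeasurable
  calc ENNReal.ofReal (1 - 2 * Fintype.card ι * η / t ^ 2)
      ≤ ENNReal.ofReal (1 - Var[∏ i, X i; μ] / (t * ∏ i, μ[X i]) ^ 2) := by
        refine ENNReal.ofReal_le_ofReal (sub_le_sub_left ?_ 1)
        rw [mul_pow, mul_comm (t ^ 2), ← div_div]
        exact div_le_div_of_nonneg_right ((div_le_iff₀ (by positivity)).2 hvar) (by positivity)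
    _ ≤ μ {ω | |(∏ i, X i) ω - μ[∏ i, X i]| < t * ∏ i, μ[X i]} :=
        ofReal_one_sub_variance_div_sq_le_measure hR (by positivity)
    _ = μ {ω | |∏ i, X i ω - ∏ i, μ[X i]| < t * ∏ i, μ[X i]} := by
        rw [hmean]
        simp only [Finset.prod_apply]

section sampleMean

variable {s : ℕ} {Y : Fin s → Ω → ℝ} {q : ℝ}

lemma measurable_sampleMean (hY : ∀ j, Measurable (Y j)) : Measurable (sampleMean Y) :=
  measurable_const.mul (Finset.measurable_sum _ fun j _ ↦ hY j)

lemma integral_sampleMean (hs : s ≠ 0) (hY : ∀ j, Integrable (Y j) μ) (hq : ∀ j, μ[Y j] = q) :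
    μ[sampleMean Y] = q := by
  simp only [sampleMean]
  rw [integral_const_mul, integral_finsetSum _ fun j _ ↦ hY j]
  simp [hq, hs]

variable [IsProbabilityMeasure μ] (hY : ∀ j, Measurable (Y j))
  (h01 : ∀ j ω, Y j ω = 0 ∨ Y j ω = 1) (hind : Pairwise fun j k ↦ IndepFun (Y j) (Y k) μ)
  (hq : ∀ j, μ[Y j] = q)
include hY h01 hind hq

lemma variance_sampleMean_of_eq_zero_or_one : Var[sampleMean Y; μ] = (q - q ^ 2) / s := by
  have hsum : Var[∑ j, Y j; μ] = s * (q - q ^ 2) := by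
    rw [IndepFun.variance_sum (fun j _ ↦ memLp_of_eq_zero_or_one (hY j) (h01 j) 2)
      fun j _ k _ hjk ↦ hind hjk]
    simp [variance_eq_integral_sub_sq_of_eq_zero_or_one (hY _) (h01 _), hq, mul_sub]
  have hmean : sampleMean Y = fun ω ↦ (s : ℝ)⁻¹ * (∑ j, Y j) ω := by
    ext ω; simp [sampleMean]
  rw [hmean, variance_const_mul, hsum]
  rcases eq_or_ne s 0 with rfl | hs
  · simp
  · field_simp

lemma integral_sampleMean_sq_le_of_eq_zero_or_one (hs : s ≠ 0) :
    μ[sampleMean Y ^ 2] ≤ (1 + (s * q)⁻¹) * μ[sampleMean Y] ^ 2 := by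
  have hmean : μ[sampleMean Y] = q :=
    integral_sampleMean hs (fun j ↦ (memLp_of_eq_zero_or_one (hY j) (h01 j) 1).integrable le_rfl) hq
  have hbdd ω : sampleMean Y ω ∈ Set.Icc (0 : ℝ) 1 :=
    sampleMean_mem_Icc fun j ↦ by rcases h01 j ω with h | h <;> simp [h]
  have hL2 : MemLp (sampleMean Y) 2 μ :=
    MemLp.of_bound (measurable_sampleMean hY).aestronglyMeasurable 1
      (.of_forall fun ω ↦ by rw [Real.norm_of_nonneg (hbdd ω).1]; exact (hbdd ω).2)
  have hsq : μ[sampleMean Y ^ 2] = (q - q ^ 2) / s + q ^ 2 := by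
    rw [← variance_sampleMean_of_eq_zero_or_one hY h01 hind hq, variance_eq_sub hL2, hmean]
    ring
  have hq_div : (s * q)⁻¹ * q ^ 2 = q / s := by
    rcases eq_or_ne q 0 with rfl | hq0
    · simp
    · field_simp
  rw [hsq, hmean, add_mul, one_mul, hq_div, add_comm]
  gcongr
  nlinarith

end sampleMean

lemma ofReal_le_measure_abs_prod_sampleMean_sub_lt {ι : Type*} [Fintype ι] {s : ℕ}
    {B : ι × Fin s → Ω → ℝ} (hBmeas : ∀ q, Measurable (B q))
    (hB01 : ∀ q ω, B q ω = 0 ∨ B q ω = 1) (hindep : iIndepFun B μ) {p : ι → ℝ}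
    (hmean : ∀ i j, μ[B (i, j)] = p i) (hp : ∀ i, 0 < p i) (hs : s ≠ 0) {η : ℝ} (hη : 0 ≤ η)
    (hη2 : 2 * Fintype.card ι * η ≤ 1) (hsp : ∀ i, (s * p i)⁻¹ ≤ η) {t : ℝ} (ht : 0 < t) :
    ENNReal.ofReal (1 - 2 * Fintype.card ι * η / t ^ 2) ≤
      μ {ω | |∏ i, sampleMean (fun j ↦ B (i, j)) ω - ∏ i, p i| < t * ∏ i, p i} := by
  have := hindep.isProbabilityMeasure
  set X : ι → Ω → ℝ := fun i ↦ sampleMean fun j ↦ B (i, j)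
  have hXmean i : μ[X i] = p i := integral_sampleMean hs
    (fun j ↦ (memLp_of_eq_zero_or_one (hBmeas _) (hB01 _) 1).integrable le_rfl) (hmean i)
  have hXsq i : μ[X i ^ 2] ≤ (1 + η) * μ[X i] ^ 2 := by
    refine (integral_sampleMean_sq_le_of_eq_zero_or_one (fun j ↦ hBmeas _) (fun j ↦ hB01 _)
      (fun j k hjk ↦ hindep.indepFun (by simpa using hjk)) (hmean i) hs).trans ?_
    gcongr
    exact hsp i
  have hXind : iIndepFun X μ :=
    (hindep.curry hBmeas).comp (fun _ y ↦ (s : ℝ)⁻¹ * ∑ j, y j) fun _ ↦ by fun_prop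
  simpa only [hXmean] using ofReal_le_measure_abs_prod_sub_lt hXind
    (fun i ↦ measurable_sampleMean fun j ↦ hBmeas _)
    (fun i ω ↦ sampleMean_mem_Icc fun j ↦ by rcases hB01 (i, j) ω with h | h <;> simp [h])
    hη hη2 hXsq ht (by simpa only [hXmean] using Finset.prod_pos fun i _ ↦ hp i)

end ProbabilityTheory

section AnnealingSchedule

variable {m : ℕ} {Zmax ε : ℝ}

lemma four_fifths_mul_inv_le_of_abs_sub_le {x y : ℝ} (hm : 0 < m) (hZmax : 0 < Zmax)
    (hε : ε ≤ 1) (hy : Zmax⁻¹ ≤ y) (h : |x - y| ≤ ε / (5 * Zmax * m)) : 4 / 5 * Zmax⁻¹ ≤ x := by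
  have hm1 : (1 : ℝ) ≤ m := Nat.one_le_cast.2 hm
  have : ε / (5 * Zmax * m) ≤ 1 / 5 * Zmax⁻¹ := by
    rw [div_le_iff₀ (by positivity)]
    field_simp
    nlinarith
  linarith [(abs_sub_le_iff.1 h).2]

lemma prod_mem_Icc_of_abs_sub_le_div {ρ p : Fin m → ℝ} (hm : 0 < m) (hZmax : 0 < Zmax)
    (hε0 : 0 < ε) (hε1 : ε ≤ 1) (hρ : ∀ i, Zmax⁻¹ ≤ ρ i)
    (h : ∀ i, |p i - ρ i| ≤ ε / (5 * Zmax * m)) :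
    ∏ i, p i ∈ Set.Icc ((1 - ε / 5) * ∏ i, ρ i) ((1 + 2 * ε / 5) * ∏ i, ρ i) := by
  have hm1 : (1 : ℝ) ≤ m := Nat.one_le_cast.2 hm
  have hmδ : m * (ε / (5 * m)) = ε / 5 := by field_simp
  have hrel i : |p i - ρ i| ≤ ε / (5 * m) * ρ i :=
    (h i).trans <| calc
      ε / (5 * Zmax * m) = ε / (5 * m) * Zmax⁻¹ := by ring
      _ ≤ ε / (5 * m) * ρ i := by gcongr; exact hρ i
  have := prod_mem_Icc_of_abs_sub_le_mul (by positivity)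
    (by rw [div_le_iff₀ (by positivity)]; linarith)
    (by rw [Fintype.card_fin, mul_assoc, hmδ]; linarith)
    (fun i ↦ (inv_pos.2 hZmax).le.trans (hρ i)) hrel
  rwa [Fintype.card_fin, mul_assoc, hmδ, ← mul_div_assoc] at this

lemma inv_mul_le_sq_div_of_le {s q : ℝ} (hm : 0 < m) (hZmax : 0 < Zmax) (hε : 0 < ε)
    (hs : 125 * Zmax * m / ε ^ 2 ≤ s) (hq : 4 / 5 * Zmax⁻¹ ≤ q) :
    (s * q)⁻¹ ≤ ε ^ 2 / (100 * m) := by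
  have hsq : 100 * m / ε ^ 2 ≤ s * q :=
    calc 100 * m / ε ^ 2 = 125 * Zmax * m / ε ^ 2 * (4 / 5 * Zmax⁻¹) := by field_simp; ring
      _ ≤ s * q := mul_le_mul hs hq (by positivity) ((by positivity : (0 : ℝ) ≤ _).trans hs)
  exact (inv_anti₀ (by positivity) hsq).trans_eq (inv_div _ _)

end AnnealingSchedule

lemma pos_and_inv_bounds_of_abs_sub_lt {ε Z P r : ℝ} (hε0 : 0 < ε) (hε1 : ε ≤ 1) (hZ : 0 < Z)
    (hPlow : (1 - ε / 5) * Z⁻¹ ≤ P) (hPup : P ≤ (1 + 2 * ε / 5) * Z⁻¹)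
    (hr : |r - P| < ε / 3 * P) :
    0 < r ∧ (1 - ε) * Z ≤ r⁻¹ ∧ r⁻¹ ≤ (1 + ε) * Z := by
  have hP : 0 < P := lt_of_lt_of_le (by have := inv_pos.2 hZ; nlinarith) hPlow
  have hPZlow : 1 - ε / 5 ≤ P * Z := by
    simpa [hZ.ne'] using mul_le_mul_of_nonneg_right hPlow hZ.le
  have hPZup : P * Z ≤ 1 + 2 * ε / 5 := by
    simpa [hZ.ne'] using mul_le_mul_of_nonneg_right hPup hZ.le
  obtain ⟨hr1, hr2⟩ := abs_sub_lt_iff.1 hr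
  have hr0 : 0 < r := by nlinarith
  have hrZlow : (1 - ε / 3) * (1 - ε / 5) ≤ r * Z := by nlinarith
  have hrZup : r * Z ≤ (1 + ε / 3) * (1 + 2 * ε / 5) := by nlinarith
  refine ⟨hr0, ?_, ?_⟩
  · rw [inv_eq_one_div, le_div_iff₀ hr0]
    nlinarith [mul_le_mul_of_nonneg_left hrZup (by linarith : 0 ≤ 1 - ε), pow_pos hε0 2,
      pow_pos hε0 3]
  · rw [inv_eq_one_div, div_le_iff₀ hr0]
    nlinarith [mul_le_mul_of_nonneg_left hrZlow (by linarith : 0 ≤ 1 + ε),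
      mul_nonneg hε0.le (by linarith : 0 ≤ 1 - ε), pow_pos hε0 3]

/-- (Analysis of the simulated-annealing estimator.) Given
`ρ_1, …, ρ_m ∈ [1/Z_max, 1]` with `∏ ρ_i = 1/Z`, and mutually independent `{0,1}`-valued
samples `B_{i,j}`, `j ∈ [s]`, with means `p_i` that are `ε/(5 Z_max m)`-close to `ρ_i`,
where `s ≥ 1 + 125 Z_max m/ε²`, the inverse of the product of the empirical means
`ρ̂_i = (1/s) ∑_j B_{i,j}` is a multiplicative `ε`-approximation of `Z` with probability
at least `3/4`. -/
theorem annealing_estimator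
    {Ω : Type*} [MeasurableSpace Ω] (μ : Measure Ω) [IsProbabilityMeasure μ]
    (m : ℕ) (hm : 0 < m) (Zmax : ℝ) (hZmax : 1 ≤ Zmax)
    (ε : ℝ) (hε : ε ∈ Set.Ioc (0 : ℝ) 1) (Z : ℝ) (hZ : 0 < Z)
    (ρ : Fin m → ℝ) (hρ : ∀ i, ρ i ∈ Set.Icc Zmax⁻¹ 1)
    (hρprod : ∏ i, ρ i = Z⁻¹)
    (s : ℕ) (hs : 1 + 125 * Zmax * m / ε ^ 2 ≤ (s : ℝ))
    (B : Fin m × Fin s → Ω → ℝ)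
    (hBmeas : ∀ p, Measurable (B p))
    (hB01 : ∀ p ω, B p ω = 0 ∨ B p ω = 1)
    (hindep : ProbabilityTheory.iIndepFun B μ)
    (p : Fin m → ℝ)
    (hmean : ∀ i j, ∫ ω, B (i, j) ω ∂μ = p i)
    (hclose : ∀ i, |p i - ρ i| ≤ ε / (5 * Zmax * m)) :
    (3 / 4 : ℝ≥0∞) ≤
      μ {ω | 0 < ∏ i, (s : ℝ)⁻¹ * ∑ j, B (i, j) ω ∧
        (1 - ε) * Z ≤ (∏ i, (s : ℝ)⁻¹ * ∑ j, B (i, j) ω)⁻¹ ∧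
        (∏ i, (s : ℝ)⁻¹ * ∑ j, B (i, j) ω)⁻¹ ≤ (1 + ε) * Z} := by
  obtain ⟨hε0, hε1⟩ := hε
  have hZmax0 : 0 < Zmax := by linarith
  have hs0 : (0 : ℝ) < s := by
    have : 0 < 125 * Zmax * m / ε ^ 2 := by positivity
    linarith
  have hp_low i := four_fifths_mul_inv_le_of_abs_sub_le hm hZmax0 hε1 (hρ i).1 (hclose i)
  obtain ⟨hPlow, hPup⟩ :=
    prod_mem_Icc_of_abs_sub_le_div hm hZmax0 hε0 hε1 (fun i ↦ (hρ i).1) hclose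
  rw [hρprod] at hPlow hPup
  have hconc := ofReal_le_measure_abs_prod_sampleMean_sub_lt hBmeas hB01 hindep hmean
    (fun i ↦ lt_of_lt_of_le (by positivity) (hp_low i)) (Nat.cast_ne_zero.1 hs0.ne')
    (by positivity) (by rw [Fintype.card_fin]; field_simp; nlinarith)
    (fun i ↦ inv_mul_le_sq_div_of_le hm hZmax0 hε0 (by linarith) (hp_low i)) (t := ε / 3)
    (by positivity)
  calc (3 / 4 : ℝ≥0∞) = ENNReal.ofReal (3 / 4) := by
        rw [ENNReal.ofReal_div_of_pos (by norm_num)]; simp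
    _ ≤ ENNReal.ofReal (1 - 2 * Fintype.card (Fin m) * (ε ^ 2 / (100 * m)) / (ε / 3) ^ 2) := by
        refine ENNReal.ofReal_le_ofReal ?_
        rw [Fintype.card_fin]
        field_simp
        nlinarith
    _ ≤ _ := hconc
    _ ≤ _ := measure_mono fun ω hω ↦ pos_and_inv_bounds_of_abs_sub_lt hε0 hε1 hZ hPlow hPup hω
end
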